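/- arXiv:1812.03548 — 8 statements merged into one kernel-verified Lean document; each statement's English description precedes it below -/
import Mathlib

section
/- Suppose Z and W are random variables such that for every λ > 0 one has Ent(e^{λZ}) ≤ λ²·E[W·e^{λZ}], and W satisfies the tail bound P(W > L + θt) ≤ e^{−t} for all t > 0, where L, θ > 0. Then there is an absolute constant c > 0 such that for all t > 0, P(Z − E Z > t) ≤ exp(−c·min{t²/(L + θ), t/√θ}). -/
open MeasureTheory ProbabilityTheory Real

/-- Entropy of a nonnegative random variable: `Ent(Z) = E[Z log Z] - E[Z] log E[Z]`. -/
noncomputable def entropy {Ω : Type*} [MeasurableSpace Ω] (μ : Measure Ω) (Z : Ω → ℝ) : ℝ :=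
  (∫ ω, Z ω * Real.log (Z ω) ∂μ) - (∫ ω, Z ω ∂μ) * Real.log (∫ ω, Z ω ∂μ)

/-
Gibbs' variational inequality `E[Y U] ≤ Ent Y + E[Y] log E[e^U]`, applied to `Y = e^{λZ}` and
`U = (W - L) / (2θ)` (for which the tail bound gives `E e^U ≤ 2`), bounds `E[W e^{λZ}]` by
`L E e^{λZ} + 2θ (Ent e^{λZ} + E e^{λZ})`. For `λ ≤ 1 / (2√θ)` the entropy on the right is
absorbed into the left, leaving `Ent e^{λZ} ≤ K λ² E e^{λZ}` with `K = 2 (L + 2θ)`. Gibbs'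
inequality with `U = λZ/2` turns this into `ψ(λ)/λ ≤ ψ(λ/2)/(λ/2) + Kλ` for the cumulant
generating function `ψ`; iterating the halving and using `ψ(s)/s → E Z` as `s → 0⁺` gives
`ψ(λ) ≤ λ E Z + 2Kλ²` (Herbst's argument without derivatives). Chernoff's bound at
`λ = min (t / (4K)) (1 / (2√θ))` concludes.
-/

open Filter Set
open scoped Topology

lemma mul_le_mul_log_sub_sub_add_mul_exp {u F : ℝ} (v : ℝ) (hu : 0 ≤ u) (hF : 0 < F) :
    u * v ≤ u * (log u - log F) - u + F * exp v := by
  rcases hu.eq_or_lt with rfl | hu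
  · simp [(exp_pos v).le, hF.le, mul_nonneg]
  have hrepr : F * exp v = u * exp (v - (log u - log F)) := by
    rw [exp_sub, exp_sub, exp_log hu, exp_log hF]; field_simp
  nlinarith [mul_le_mul_of_nonneg_left (add_one_le_exp (v - (log u - log F))) hu.le]

lemma le_add_of_le_half_add {H G : ℝ → ℝ} {K b l m : ℝ} (hK : 0 ≤ K) (hl : 0 < l)
    (hlb : l ≤ b) (hstep : ∀ x, 0 < x → x ≤ b → H x ≤ H (x / 2) + K * x)
    (hHG : ∀ s, 0 < s → H s ≤ G s) (hG : Tendsto G (𝓝[>] 0) (𝓝 m)) :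
    H l ≤ m + 2 * K * l := by
  have hiter : ∀ n : ℕ, H l + 2 * K * (l / 2 ^ n) ≤ H (l / 2 ^ n) + 2 * K * l := by
    intro n
    induction n with
    | zero => simp
    | succ n ih =>
      have hxb : l / 2 ^ n ≤ b :=
        (div_le_self hl.le (one_le_pow₀ one_le_two)).trans hlb
      have := hstep (l / 2 ^ n) (by positivity) hxb
      rw [pow_succ, ← div_div]
      linarith
  have hlim : Tendsto (fun n : ℕ => l / 2 ^ n) atTop (𝓝[>] 0) := by
    refine tendsto_nhdsWithin_iff.2
      ⟨?_, Eventually.of_forall fun n => mem_Ioi.2 (by positivity)⟩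
    simpa using tendsto_const_nhds.div_atTop (tendsto_pow_atTop_atTop_of_one_lt one_lt_two)
  refine ge_of_tendsto' ((hG.comp hlim).add_const (2 * K * l)) fun n => ?_
  have := hiter n
  have := hHG (l / 2 ^ n) (by positivity)
  have : 0 ≤ 2 * K * (l / 2 ^ n) := by positivity
  simp only [Function.comp_apply]
  linarith

lemma abs_exp_mul_sub_one_div_le {s : ℝ} (z : ℝ) (hs : 0 < s) (hs1 : s ≤ 1) :
    |(exp (s * z) - 1) / s| ≤ |z| + |z * exp z| := by
  rw [abs_div, abs_of_pos hs, div_le_iff₀ hs]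
  rcases le_or_gt z 0 with hz | hz
  · have h1 : exp (s * z) ≤ 1 := exp_le_one_iff.2 (mul_nonpos_of_nonneg_of_nonpos hs.le hz)
    have h2 := add_one_le_exp (s * z)
    rw [abs_of_nonpos (by linarith), abs_of_nonpos hz]
    nlinarith [abs_nonneg (z * exp z)]
  · have h1 := mul_le_mul_of_nonneg_left (add_one_le_exp (-(s * z))) (exp_pos (s * z)).le
    rw [← exp_add, add_neg_cancel, exp_zero] at h1
    have h2 : exp (s * z) ≤ exp z := exp_le_exp.2 (by nlinarith)
    rw [abs_of_nonneg (sub_nonneg.2 (one_le_exp (by positivity))), abs_of_pos hz,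
      abs_of_pos (mul_pos hz (exp_pos z))]
    nlinarith [mul_le_mul_of_nonneg_left h2 (mul_pos hs hz).le]

lemma exists_mul_sq_sub_mul_le_neg_min {C b t : ℝ} (hC : 0 < C) (hb : 0 < b) (ht : 0 < t) :
    ∃ l, 0 < l ∧ l ≤ b ∧ C * l ^ 2 - l * t ≤ -min (t ^ 2 / (4 * C)) (b * t / 2) := by
  rcases le_or_gt (t / (2 * C)) b with hle | hlt
  · refine ⟨t / (2 * C), by positivity, hle, ?_⟩
    have : C * (t / (2 * C)) ^ 2 - t / (2 * C) * t = -(t ^ 2 / (4 * C)) := by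
      field_simp; ring
    rw [this]
    exact neg_le_neg (min_le_left _ _)
  · refine ⟨b, hb, le_rfl, ?_⟩
    rw [lt_div_iff₀ (by positivity)] at hlt
    have : C * b ^ 2 - b * t ≤ -(b * t / 2) := by nlinarith
    exact this.trans (neg_le_neg (min_le_right _ _))

section Moments

variable {Ω : Type*} [MeasurableSpace Ω] {μ : Measure Ω}

/-- The Gibbs variational inequality. -/
theorem integral_mul_le_entropy_add_mul_log_integral_exp {Y U : Ω → ℝ}
    (hY0 : 0 ≤ᵐ[μ] Y) (hY : Integrable Y μ) (hYpos : 0 < ∫ ω, Y ω ∂μ)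
    (hYlog : Integrable (fun ω => Y ω * log (Y ω)) μ)
    (hYU : Integrable (fun ω => Y ω * U ω) μ) (hU : Integrable (fun ω => exp (U ω)) μ) :
    ∫ ω, Y ω * U ω ∂μ ≤ entropy μ Y + (∫ ω, Y ω ∂μ) * log (∫ ω, exp (U ω) ∂μ) := by
  set F := ∫ ω, Y ω ∂μ
  set E := ∫ ω, exp (U ω) ∂μ
  have hμ : NeZero μ := ⟨by rintro rfl; simp [F] at hYpos⟩
  have hE : 0 < E := integral_exp_pos hU
  -- Young's inequality with `v = U - log E`, so that `F * exp v` integrates to `F`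
  have hpt : ∀ᵐ ω ∂μ, Y ω * U ω ≤
      Y ω * log (Y ω) + (log E - log F - 1) * Y ω + F / E * exp (U ω) := by
    filter_upwards [hY0] with ω hω
    have := mul_le_mul_log_sub_sub_add_mul_exp (U ω - log E) hω hYpos
    rw [exp_sub, exp_log hE] at this
    linarith [show F * (exp (U ω) / E) = F / E * exp (U ω) by ring]
  have hY' : Integrable (fun ω => Y ω * log (Y ω) + (log E - log F - 1) * Y ω) μ :=
    hYlog.add (hY.const_mul _)
  have hg : Integrable (fun ω => Y ω * log (Y ω) + (log E - log F - 1) * Y ω +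
      F / E * exp (U ω)) μ := hY'.add (hU.const_mul _)
  have hint := integral_mono_ae hYU hg hpt
  rw [integral_add hY' (hU.const_mul _), integral_add hYlog (hY.const_mul _),
    integral_const_mul, integral_const_mul] at hint
  unfold entropy
  field_simp at hint
  nlinarith

lemma lintegral_exp_le_of_measure_lt_le [IsProbabilityMeasure μ] {U : Ω → ℝ} {c : ℝ}
    (hc : 1 < c) (hU : AEMeasurable U μ)
    (htail : ∀ s, 0 < s → μ {ω | s < U ω} ≤ ENNReal.ofReal (exp (-(c * s)))) :
    ∫⁻ ω, ENNReal.ofReal (exp (U ω)) ∂μ ≤ 1 + ENNReal.ofReal (c - 1)⁻¹ := by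
  rw [lintegral_eq_lintegral_meas_lt μ (ae_of_all _ fun ω => (exp_pos _).le)
    (measurable_exp.comp_aemeasurable hU), ← Ioc_union_Ioi_eq_Ioi zero_le_one,
    lintegral_union measurableSet_Ioi Ioc_disjoint_Ioi_same]
  gcongr
  · calc ∫⁻ t in Ioc (0 : ℝ) 1, μ {ω | t < exp (U ω)}
        ≤ ∫⁻ _ in Ioc (0 : ℝ) 1, 1 := by gcongr; exact prob_le_one
      _ = 1 := by simp
  · have hpow : ∀ t ∈ Ioi (1 : ℝ), μ {ω | t < exp (U ω)} ≤ ENNReal.ofReal (t ^ (-c)) := by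
      intro t ht
      have ht0 : 0 < t := zero_lt_one.trans ht
      simp_rw [← log_lt_iff_lt_exp ht0]
      refine (htail _ (log_pos ht)).trans_eq ?_
      rw [rpow_def_of_pos ht0, mul_neg, mul_comm]
    calc ∫⁻ t in Ioi (1 : ℝ), μ {ω | t < exp (U ω)}
        ≤ ∫⁻ t in Ioi (1 : ℝ), ENNReal.ofReal (t ^ (-c)) :=
          setLIntegral_mono' measurableSet_Ioi hpow
      _ = ENNReal.ofReal (∫ t in Ioi (1 : ℝ), t ^ (-c)) :=
          (ofReal_integral_eq_lintegral_ofReal (integrableOn_Ioi_rpow_of_lt (by linarith)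
            one_pos) ((ae_restrict_mem measurableSet_Ioi).mono fun t ht =>
              rpow_nonneg (zero_lt_one.trans ht).le _)).symm
      _ = ENNReal.ofReal (c - 1)⁻¹ := by
        rw [integral_Ioi_rpow_of_lt (by linarith) one_pos, one_rpow, neg_div, ← div_neg,
          neg_add', neg_neg, one_div]

lemma integrable_exp_of_measure_lt_le [IsProbabilityMeasure μ] {U : Ω → ℝ} {c : ℝ}
    (hc : 1 < c) (hU : AEMeasurable U μ)
    (htail : ∀ s, 0 < s → μ {ω | s < U ω} ≤ ENNReal.ofReal (exp (-(c * s)))) :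
    Integrable (fun ω => exp (U ω)) μ ∧ ∫ ω, exp (U ω) ∂μ ≤ 1 + (c - 1)⁻¹ := by
  have hlint := lintegral_exp_le_of_measure_lt_le hc hU htail
  have hnn : 0 ≤ᵐ[μ] fun ω => exp (U ω) := ae_of_all _ fun ω => (exp_pos _).le
  have hmeas := (measurable_exp.comp_aemeasurable hU).aestronglyMeasurable
  refine ⟨⟨hmeas, ?_⟩, ?_⟩
  · rw [hasFiniteIntegral_iff_ofReal hnn]
    exact hlint.trans_lt (by finiteness)
  · rw [integral_eq_lintegral_of_nonneg_ae hnn hmeas]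
    refine ENNReal.toReal_le_of_le_ofReal (by have := inv_pos.2 (sub_pos.2 hc); positivity) ?_
    rwa [ENNReal.ofReal_add zero_le_one (inv_pos.2 (sub_pos.2 hc)).le, ENNReal.ofReal_one]

variable {Z W : Ω → ℝ} {L θ l : ℝ}

lemma integrable_mul_exp_mul (hexp : Ioi 0 ⊆ integrableExpSet Z μ) (hl : 0 < l) :
    Integrable (fun ω => Z ω * exp (l * Z ω)) μ := by
  have hint : l ∈ interior (integrableExpSet Z μ) :=
    interior_mono hexp (by rwa [interior_Ioi])
  simpa using integrable_pow_mul_exp_of_mem_interior_integrableExpSet hint 1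

lemma entropy_exp_mul (l : ℝ) :
    entropy μ (fun ω => exp (l * Z ω)) =
      l * ∫ ω, Z ω * exp (l * Z ω) ∂μ - mgf Z μ l * cgf Z μ l := by
  simp_rw [entropy, log_exp, ← integral_const_mul]
  congr 2 with ω
  ring

lemma integral_mul_exp_mul_le_of_tail [IsProbabilityMeasure μ] (hθ : 0 < θ)
    (hexp : Ioi 0 ⊆ integrableExpSet Z μ) (hl : 0 < l)
    (hW : Integrable (fun ω => W ω * exp (l * Z ω)) μ)
    (htail : ∀ t, 0 < t → μ {ω | W ω > L + θ * t} ≤ ENNReal.ofReal (exp (-t))) :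
    ∫ ω, W ω * exp (l * Z ω) ∂μ ≤
      L * mgf Z μ l + 2 * θ * (entropy μ (fun ω => exp (l * Z ω)) + mgf Z μ l) := by
  have hexpl : Integrable (fun ω => exp (l * Z ω)) μ := hexp hl
  have hZm : AEMeasurable Z μ := aemeasurable_of_aemeasurable_exp_mul hl.ne' hexpl.aemeasurable
  have hWm : AEMeasurable W μ :=
    (hW.aemeasurable.mul (measurable_exp.comp_aemeasurable (hZm.const_mul (-l)))).congr
      (ae_of_all _ fun ω => by simp [mul_assoc, ← exp_add])
  -- normalized so that `U` has an exponential tail of rate `2`, hence `E e^U ≤ 2`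
  set U : Ω → ℝ := fun ω => (W ω - L) / (2 * θ)
  have hUtail : ∀ s, 0 < s → μ {ω | s < U ω} ≤ ENNReal.ofReal (exp (-(2 * s))) := by
    intro s hs
    convert htail (2 * s) (by positivity) using 2
    ext ω
    simp only [U, mem_ofPred_eq, lt_div_iff₀ (by positivity : 0 < 2 * θ)]
    constructor <;> intro h <;> linarith
  obtain ⟨hU, hU2⟩ := integrable_exp_of_measure_lt_le one_lt_two
    ((hWm.sub_const L).div_const (2 * θ)) hUtail
  have hYU : (fun ω => exp (l * Z ω) * U ω) =
      fun ω => (W ω * exp (l * Z ω) - L * exp (l * Z ω)) / (2 * θ) := by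
    ext ω; simp only [U]; ring
  have hYlog : (fun ω => exp (l * Z ω) * log (exp (l * Z ω))) =
      fun ω => l * (Z ω * exp (l * Z ω)) := by
    ext ω; rw [log_exp]; ring
  have hgibbs := integral_mul_le_entropy_add_mul_log_integral_exp
    (ae_of_all _ fun ω => (exp_pos _).le) hexpl (mgf_pos hexpl)
    (hYlog ▸ (integrable_mul_exp_mul hexp hl).const_mul l)
    (hYU ▸ (hW.sub (hexpl.const_mul L)).div_const _) hU
  have hlog : log (∫ ω, exp (U ω) ∂μ) ≤ 1 := by
    have := log_le_sub_one_of_pos (integral_exp_pos hU)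
    norm_num at hU2
    linarith
  rw [hYU, integral_div, integral_sub hW (hexpl.const_mul L), integral_const_mul,
    div_le_iff₀ (by positivity)] at hgibbs
  have hF := mgf_pos hexpl (X := Z)
  unfold mgf at hF ⊢
  nlinarith [mul_le_mul_of_nonneg_left hlog hF.le]

lemma entropy_exp_mul_le_of_tail [IsProbabilityMeasure μ] (hL : 0 ≤ L) (hθ : 0 < θ)
    (hexp : Ioi 0 ⊆ integrableExpSet Z μ) (hl : 0 < l) (hlθ : 4 * θ * l ^ 2 ≤ 1)
    (hW : Integrable (fun ω => W ω * exp (l * Z ω)) μ)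
    (hent : entropy μ (fun ω => exp (l * Z ω)) ≤ l ^ 2 * ∫ ω, W ω * exp (l * Z ω) ∂μ)
    (htail : ∀ t, 0 < t → μ {ω | W ω > L + θ * t} ≤ ENNReal.ofReal (exp (-t))) :
    entropy μ (fun ω => exp (l * Z ω)) ≤ 2 * (L + 2 * θ) * l ^ 2 * mgf Z μ l := by
  have hF : 0 < mgf Z μ l := mgf_pos (hexp hl)
  -- the entropy reappears on the right with the factor `2 θ l² ≤ 1 / 2` and is absorbed
  have hself := hent.trans (mul_le_mul_of_nonneg_left
    (integral_mul_exp_mul_le_of_tail hθ hexp hl hW htail) (sq_nonneg l))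
  rcases le_or_gt (entropy μ (fun ω => exp (l * Z ω))) 0 with hneg | hpos
  · exact hneg.trans (by positivity)
  · nlinarith

lemma measure_sub_integral_gt_le [IsProbabilityMeasure μ]
    (hexp : Ioi 0 ⊆ integrableExpSet Z μ) (hl : 0 < l) {C : ℝ}
    (hcgf : cgf Z μ l ≤ l * ∫ ω, Z ω ∂μ + C * l ^ 2) (t : ℝ) :
    μ {ω | Z ω - ∫ ω', Z ω' ∂μ > t} ≤ ENNReal.ofReal (exp (C * l ^ 2 - l * t)) := by
  have hchernoff := measure_ge_le_exp_cgf (∫ ω, Z ω ∂μ + t) hl.le (hexp hl)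
  calc μ {ω | Z ω - ∫ ω', Z ω' ∂μ > t}
      ≤ μ {ω | ∫ ω', Z ω' ∂μ + t ≤ Z ω} :=
        measure_mono fun ω h => by simp only [mem_ofPred_eq] at h ⊢; linarith
    _ = ENNReal.ofReal (μ.real {ω | ∫ ω', Z ω' ∂μ + t ≤ Z ω}) := by
        rw [ofReal_measureReal]
    _ ≤ ENNReal.ofReal (exp (C * l ^ 2 - l * t)) :=
        ENNReal.ofReal_le_ofReal (hchernoff.trans (exp_le_exp.2 (by linarith)))

lemma tendsto_mgf_sub_one_div [IsProbabilityMeasure μ] (hZ : Integrable Z μ)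
    (hexp : Ioi 0 ⊆ integrableExpSet Z μ) :
    Tendsto (fun s => (mgf Z μ s - 1) / s) (𝓝[>] 0) (𝓝 (∫ ω, Z ω ∂μ)) := by
  have heq : (fun s => ∫ ω, (exp (s * Z ω) - 1) / s ∂μ) =ᶠ[𝓝[>] 0]
      fun s => (mgf Z μ s - 1) / s := by
    filter_upwards [self_mem_nhdsWithin] with s hs
    rw [integral_div, integral_sub (hexp hs) (integrable_const 1), integral_const,
      probReal_univ, one_smul, mgf]
  have hZm : AEMeasurable Z μ := hZ.aemeasurable
  refine Tendsto.congr' heq (tendsto_integral_filter_of_dominated_convergence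
    (fun ω => |Z ω| + |Z ω * exp (Z ω)|) ?_ ?_ ?_ ?_)
  · exact Eventually.of_forall fun s => (((measurable_exp.comp_aemeasurable
      (hZm.const_mul s)).sub_const 1).div_const s).aestronglyMeasurable
  · filter_upwards [Ioo_mem_nhdsGT one_pos] with s hs
    exact ae_of_all _ fun ω => abs_exp_mul_sub_one_div_le (Z ω) hs.1 hs.2.le
  · exact hZ.abs.add (by simpa using (integrable_mul_exp_mul hexp one_pos).abs)
  · refine ae_of_all _ fun ω => ?_
    have hderiv : HasDerivAt (fun s => exp (s * Z ω)) (Z ω) 0 := by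
      simpa using ((hasDerivAt_id (0 : ℝ)).mul_const (Z ω)).exp
    simpa [div_eq_inv_mul] using
      (hasDerivAt_iff_tendsto_slope_zero.1 hderiv).mono_left (nhdsGT_le_nhdsNE 0)

lemma cgf_le_two_mul_cgf_half_add [IsProbabilityMeasure μ]
    (hexp : Ioi 0 ⊆ integrableExpSet Z μ) {K x : ℝ} (hx : 0 < x)
    (hent : entropy μ (fun ω => exp (x * Z ω)) ≤ K * x ^ 2 * mgf Z μ x) :
    cgf Z μ x ≤ 2 * cgf Z μ (x / 2) + K * x ^ 2 := by
  have hexpx : Integrable (fun ω => exp (x * Z ω)) μ := hexp hx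
  have hZe := integrable_mul_exp_mul hexp hx
  have hYlog : (fun ω => exp (x * Z ω) * log (exp (x * Z ω))) =
      fun ω => x * (Z ω * exp (x * Z ω)) := by
    ext ω; rw [log_exp]; ring
  have hYU : (fun ω => exp (x * Z ω) * (x / 2 * Z ω)) =
      fun ω => x / 2 * (Z ω * exp (x * Z ω)) := by
    ext ω; ring
  have hgibbs := integral_mul_le_entropy_add_mul_log_integral_exp
    (ae_of_all _ fun ω => (exp_pos _).le) hexpx (mgf_pos hexpx)
    (hYlog ▸ hZe.const_mul x) (hYU ▸ hZe.const_mul (x / 2)) (hexp (half_pos hx))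
  rw [hYU, integral_const_mul] at hgibbs
  have hF : 0 < mgf Z μ x := mgf_pos hexpx
  change _ ≤ _ + mgf Z μ x * cgf Z μ (x / 2) at hgibbs
  rw [entropy_exp_mul] at hent hgibbs
  refine le_of_mul_le_mul_left ?_ hF
  nlinarith

lemma cgf_le_of_entropy_le [IsProbabilityMeasure μ] (hZ : Integrable Z μ)
    (hexp : Ioi 0 ⊆ integrableExpSet Z μ) {K b : ℝ} (hK : 0 ≤ K)
    (hent : ∀ x, 0 < x → x ≤ b →
      entropy μ (fun ω => exp (x * Z ω)) ≤ K * x ^ 2 * mgf Z μ x)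
    (hl : 0 < l) (hlb : l ≤ b) :
    cgf Z μ l ≤ l * ∫ ω, Z ω ∂μ + 2 * K * l ^ 2 := by
  have hstep : ∀ x, 0 < x → x ≤ b →
      cgf Z μ x / x ≤ cgf Z μ (x / 2) / (x / 2) + K * x := by
    intro x hx hxb
    have := cgf_le_two_mul_cgf_half_add hexp hx (hent x hx hxb)
    rw [div_le_iff₀ hx]
    field_simp
    nlinarith
  have hHG : ∀ s, 0 < s → cgf Z μ s / s ≤ (mgf Z μ s - 1) / s := fun s hs =>
    div_le_div_of_nonneg_right (log_le_sub_one_of_pos (mgf_pos (hexp hs))) hs.le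
  have := le_add_of_le_half_add hK hl hlb hstep hHG (tendsto_mgf_sub_one_div hZ hexp)
  rw [div_le_iff₀ hl] at this
  linarith

end Moments

/-- Lemma 1.4 (grad-truncation lemma): if `Ent(e^{λZ}) ≤ λ² E[W e^{λZ}]` for all `λ > 0`
and `P(W > L + θ t) ≤ e^{-t}`, then
`P(Z - E Z > t) ≤ exp(-c min(t²/(L+θ), t/√θ))` for an absolute constant `c > 0`. -/
theorem grad_trunc_lemma :
    ∃ c : ℝ, 0 < c ∧
      ∀ (Ω : Type) (_ : MeasurableSpace Ω) (μ : Measure Ω),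
        IsProbabilityMeasure μ →
      ∀ (Z W : Ω → ℝ) (L θ : ℝ), 0 < L → 0 < θ →
        Integrable Z μ →
        (∀ l : ℝ, 0 < l →
          Integrable (fun ω => Real.exp (l * Z ω)) μ ∧
          Integrable (fun ω => W ω * Real.exp (l * Z ω)) μ ∧
          entropy μ (fun ω => Real.exp (l * Z ω)) ≤
            l ^ 2 * ∫ ω, W ω * Real.exp (l * Z ω) ∂μ) →
        (∀ t : ℝ, 0 < t → μ {ω | W ω > L + θ * t} ≤ ENNReal.ofReal (Real.exp (-t))) →
        ∀ t : ℝ, 0 < t →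
          μ {ω | Z ω - ∫ ω', Z ω' ∂μ > t} ≤
            ENNReal.ofReal
              (Real.exp (-c * min (t ^ 2 / (L + θ)) (t / Real.sqrt θ))) := by
  refine ⟨1 / 32, by norm_num, ?_⟩
  intro Ω _ μ _ Z W L θ hL hθ hZ hmom htail t ht
  have hexp : Ioi 0 ⊆ integrableExpSet Z μ := fun l hl => (hmom l hl).1
  set K := 2 * (L + 2 * θ)
  have hsθ : 0 < sqrt θ := sqrt_pos.2 hθ
  have hent : ∀ x, 0 < x → x ≤ 1 / (2 * sqrt θ) →
      entropy μ (fun ω => exp (x * Z ω)) ≤ K * x ^ 2 * mgf Z μ x := by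
    intro x hx hxb
    have hθx : 4 * θ * x ^ 2 ≤ 1 := by
      rw [le_div_iff₀ (by positivity)] at hxb
      nlinarith [sq_sqrt hθ.le, mul_le_mul hxb hxb (by positivity) zero_le_one]
    exact entropy_exp_mul_le_of_tail hL.le hθ hexp hx hθx (hmom x hx).2.1 (hmom x hx).2.2 htail
  obtain ⟨l, hl, hlb, hopt⟩ :=
    exists_mul_sq_sub_mul_le_neg_min (C := 2 * K) (b := 1 / (2 * sqrt θ)) (by positivity)
      (by positivity) ht
  have hcgf := cgf_le_of_entropy_le hZ hexp (by positivity) hent hl hlb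
  refine (measure_sub_integral_gt_le hexp hl hcgf t).trans
    (ENNReal.ofReal_le_ofReal (exp_le_exp.2 (hopt.trans ?_)))
  rw [neg_mul, neg_le_neg_iff, mul_min_of_nonneg _ _ (by norm_num)]
  refine min_le_min ?_ ?_
  · calc 1 / 32 * (t ^ 2 / (L + θ)) = t ^ 2 / (32 * (L + θ)) := by field_simp
      _ ≤ t ^ 2 / (4 * (2 * K)) :=
        div_le_div_of_nonneg_left (sq_nonneg t) (by positivity) (by simp only [K]; linarith)
  · calc 1 / 32 * (t / sqrt θ) = t / (32 * sqrt θ) := by ring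
      _ ≤ t / (4 * sqrt θ) := div_le_div_of_nonneg_left ht.le (by positivity) (by linarith)
      _ = 1 / (2 * sqrt θ) * t / 2 := by ring
end

section
/- Let Y ∈ ℝⁿ have i.i.d. components with symmetric distribution and let 𝓑 be a finite set of n×n positive-semidefinite symmetric matrices. Then E[sup_{B∈𝓑} Yᵀ Diag(B) Y] ≤ E[sup_{B∈𝓑} Yᵀ B Y], where Diag(B) is the diagonal matrix with the same diagonal entries as B. -/
/-! Flipping the signs of the coordinates of `Y` by a sign vector `s : ι → ℤˣ` does not change its
law, since the coordinates are independent and symmetric. Averaging `(s • x)ᵀ B (s • x)` over all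
`2ⁿ` sign vectors kills the off-diagonal terms and leaves `xᵀ Diag(B) x`. Hence
`sup_B xᵀ Diag(B) x` is at most the average over `s` of `sup_B (s • x)ᵀ B (s • x)`, and taking
expectations gives the claim. -/

open MeasureTheory ProbabilityTheory Matrix

section SignAveraging

variable {ι : Type*} [Fintype ι] [DecidableEq ι]

theorem Int.sum_units_pi_mul (i j : ι) :
    ∑ s : ι → ℤˣ, ((s i : ℤ) * s j) = if i = j then 2 ^ Fintype.card ι else 0 := by
  split_ifs with hij
  · subst hij
    simp [Fintype.card_pi, Fintype.card_units_int]
  · have hflip : ∑ s : ι → ℤˣ, ((s i : ℤ) * s j) = -∑ s : ι → ℤˣ, ((s i : ℤ) * s j) := by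
      rw [← Finset.sum_neg_distrib]
      exact Fintype.sum_equiv (Equiv.mulLeft (Pi.mulSingle i (-1))) _ _ fun s => by
        simp [Pi.mulSingle_eq_of_ne' hij]
    omega

theorem sum_units_smul_dotProduct_mulVec {R : Type*} [CommRing R] (B : Matrix ι ι R)
    (x : ι → R) :
    ∑ s : ι → ℤˣ, (s • x) ⬝ᵥ B *ᵥ (s • x) =
      2 ^ Fintype.card ι * (x ⬝ᵥ diagonal (fun i => B i i) *ᵥ x) := by
  have hexpand : ∀ s : ι → ℤˣ, (s • x) ⬝ᵥ B *ᵥ (s • x) =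
      ∑ i, ∑ j, (((s i : ℤ) * s j : ℤ) : R) * (x i * B i j * x j) := by
    intro s
    simp only [dotProduct, mulVec, Finset.mul_sum, Pi.smul_apply', Units.smul_def, zsmul_eq_mul]
    push_cast
    exact Finset.sum_congr rfl fun i _ => Finset.sum_congr rfl fun j _ => by ring
  simp only [hexpand]
  rw [Finset.sum_comm]
  simp only [Finset.sum_comm (γ := ι → ℤˣ), ← Finset.sum_mul, ← Int.cast_sum,
    Int.sum_units_pi_mul]
  simp [dotProduct, mulVec_diagonal, Finset.mul_sum, mul_assoc]

theorem sup'_dotProduct_diagonal_mulVec_le (𝓑 : Finset (Matrix ι ι ℝ)) (h𝓑 : 𝓑.Nonempty)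
    (x : ι → ℝ) :
    𝓑.sup' h𝓑 (fun B => x ⬝ᵥ diagonal (fun i => B i i) *ᵥ x) ≤
      (2 ^ Fintype.card ι)⁻¹ * ∑ s : ι → ℤˣ, 𝓑.sup' h𝓑 (fun B => (s • x) ⬝ᵥ B *ᵥ (s • x)) := by
  refine Finset.sup'_le _ _ fun B hB => ?_
  rw [le_inv_mul_iff₀ (by positivity), ← sum_units_smul_dotProduct_mulVec]
  exact Finset.sum_le_sum fun s _ => Finset.le_sup' (fun B => (s • x) ⬝ᵥ B *ᵥ (s • x)) hB

end SignAveraging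

section SignSymmetry

variable {Ω : Type*} [MeasurableSpace Ω] {μ : Measure Ω}

theorem ProbabilityTheory.IdentDistrib.units_int_smul {E : Type*} [AddCommGroup E]
    [MeasurableSpace E] {X : Ω → E} (h : IdentDistrib X (fun ω => -X ω) μ μ) (u : ℤˣ) :
    IdentDistrib (fun ω => u • X ω) X μ μ := by
  rcases Int.units_eq_one_or u with rfl | rfl
  · simpa using IdentDistrib.refl h.aemeasurable_fst
  · simpa using h.symm

theorem ProbabilityTheory.iIndepFun.identDistrib_units_int_smul {ι : Type*} [Countable ι]
    {Y : Ω → ι → ℝ} (hindep : iIndepFun (fun i ω => Y ω i) μ)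
    (hsymm : ∀ i, IdentDistrib (fun ω => Y ω i) (fun ω => -Y ω i) μ μ) (s : ι → ℤˣ) :
    IdentDistrib (fun ω => s • Y ω) Y μ μ :=
  IdentDistrib.pi (fun i => (hsymm i).units_int_smul (s i))
    (hindep.comp (fun i x => s i • x) fun i => by fun_prop) hindep

end SignSymmetry

theorem diag_quad_comp_general
    {Ω : Type*} [MeasurableSpace Ω] (μ : Measure Ω) [IsProbabilityMeasure μ]
    {n : ℕ} (Y : Ω → Fin n → ℝ)
    (hindep : iIndepFun (fun i ω => Y ω i) μ)
    (hsymm : ∀ i, IdentDistrib (fun ω => Y ω i) (fun ω => -(Y ω i)) μ μ)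
    (𝓑 : Finset (Matrix (Fin n) (Fin n) ℝ)) (h𝓑 : 𝓑.Nonempty)
    (hint1 : Integrable (fun ω =>
      𝓑.sup' h𝓑 fun B => Y ω ⬝ᵥ (Matrix.diagonal fun i => B i i).mulVec (Y ω)) μ)
    (hint2 : Integrable (fun ω => 𝓑.sup' h𝓑 fun B => Y ω ⬝ᵥ B.mulVec (Y ω)) μ) :
    ∫ ω, 𝓑.sup' h𝓑 (fun B => Y ω ⬝ᵥ (Matrix.diagonal fun i => B i i).mulVec (Y ω)) ∂μ ≤
      ∫ ω, 𝓑.sup' h𝓑 (fun B => Y ω ⬝ᵥ B.mulVec (Y ω)) ∂μ := by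
  set g : (Fin n → ℝ) → ℝ := fun x => 𝓑.sup' h𝓑 fun B => x ⬝ᵥ B *ᵥ x
  have hg : Measurable g := by
    rw [show g = 𝓑.sup' h𝓑 fun B x => x ⬝ᵥ B *ᵥ x from
      funext fun x => (Finset.sup'_apply h𝓑 (fun B x => x ⬝ᵥ B *ᵥ x) x).symm]
    exact Finset.measurable_sup' h𝓑 fun B _ => by fun_prop
  have hflip (s : Fin n → ℤˣ) : IdentDistrib (fun ω => g (s • Y ω)) (fun ω => g (Y ω)) μ μ :=
    (hindep.identDistrib_units_int_smul hsymm s).comp hg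
  have hint (s : Fin n → ℤˣ) : Integrable (fun ω => g (s • Y ω)) μ :=
    (hflip s).integrable_iff.mpr hint2
  calc _ ≤ ∫ ω, (2 ^ n)⁻¹ * ∑ s : Fin n → ℤˣ, g (s • Y ω) ∂μ :=
        integral_mono hint1 ((integrable_finsetSum _ fun s _ => hint s).const_mul _)
          fun ω => by simpa using sup'_dotProduct_diagonal_mulVec_le 𝓑 h𝓑 (Y ω)
    _ = (2 ^ n)⁻¹ * ∑ _s : Fin n → ℤˣ, ∫ ω, g (Y ω) ∂μ := by
        rw [integral_const_mul, integral_finsetSum _ fun s _ => hint s]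
        simp only [(hflip _).integral_eq]
    _ = ∫ ω, g (Y ω) ∂μ := by simp [Fintype.card_pi, Fintype.card_units_int]

/-- Lemma: for `Y` with i.i.d. symmetric components and a finite set `𝓑` of
positive-semidefinite symmetric matrices,
`E sup_{B∈𝓑} Yᵀ Diag(B) Y ≤ E sup_{B∈𝓑} Yᵀ B Y`. -/
theorem diag_quad_comp
    {Ω : Type*} [MeasurableSpace Ω] (μ : Measure Ω) [IsProbabilityMeasure μ]
    {n : ℕ} (Y : Ω → Fin n → ℝ)
    (hmeas : ∀ i, Measurable fun ω => Y ω i)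
    (hindep : iIndepFun (fun i ω => Y ω i) μ)
    (hid : ∀ i j, IdentDistrib (fun ω => Y ω i) (fun ω => Y ω j) μ μ)
    (hsymm : ∀ i, IdentDistrib (fun ω => Y ω i) (fun ω => -(Y ω i)) μ μ)
    (𝓑 : Finset (Matrix (Fin n) (Fin n) ℝ)) (h𝓑 : 𝓑.Nonempty)
    (hpsd : ∀ B ∈ 𝓑, Matrix.PosSemidef B)
    (hint1 : Integrable (fun ω =>
      𝓑.sup' h𝓑 fun B => Y ω ⬝ᵥ (Matrix.diagonal fun i => B i i).mulVec (Y ω)) μ)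
    (hint2 : Integrable (fun ω => 𝓑.sup' h𝓑 fun B => Y ω ⬝ᵥ B.mulVec (Y ω)) μ) :
    ∫ ω, 𝓑.sup' h𝓑 (fun B => Y ω ⬝ᵥ (Matrix.diagonal fun i => B i i).mulVec (Y ω)) ∂μ ≤
      ∫ ω, 𝓑.sup' h𝓑 (fun B => Y ω ⬝ᵥ B.mulVec (Y ω)) ∂μ :=
  diag_quad_comp_general μ Y hindep hsymm 𝓑 h𝓑 hint1 hint2
end

section
/- Let ε = (ε₁,…,εₙ) be a vector of independent Rademacher signs and let 𝓑 be a finite set of n×n real matrices. Then (E sup_{B∈𝓑} ‖Bε‖)² ≤ E sup_{B∈𝓑} ‖Bε‖² ≤ 9·(E sup_{B∈𝓑} ‖Bε‖)². -/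
/-!
The law of `ε` is uniform on the sign cube, so both integrals are averages `𝔼 σ` over
`σ : Fin n → Bool`, and the lower bound is Cauchy–Schwarz. For the upper bound put
`f σ = max_B ‖B σ‖` and `M = max_B ‖B‖²_HS`, where `‖B‖²_HS = tr (Bᵀ B)`.
The Efron–Stein inequality on the cube, proved by Walsh–Fourier expansion, bounds `Var f` by half
the average over `σ` of the sum over `i` of the squared positive parts of `f σ - f (flipAt i σ)`.
A maximiser `B` of `‖B σ‖` shows that each such positive part is at most `‖B (σ - flipAt i σ)‖`,
which is twice the norm of the `i`-th column of `B`; hence `Var f ≤ 2 M`. Khinchin's inequality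
`‖B‖²_HS ≤ 3 (𝔼 ‖B σ‖)²`, which follows by Hölder from the fourth moment bound
`𝔼 ‖B σ‖⁴ ≤ 3 ‖B‖⁴_HS`, gives `M ≤ 3 (𝔼 f)²`. Altogether `𝔼 f² ≤ (𝔼 f)² + 2 M ≤ 7 (𝔼 f)²`;
with these Hilbert–Schmidt bounds the operator-norm Poincaré inequality is not needed.
-/

open MeasureTheory ProbabilityTheory Real Matrix

noncomputable def euclNorm {n : ℕ} (v : Fin n → ℝ) : ℝ :=
  Real.sqrt (∑ i, (v i) ^ 2)

open Finset
open scoped BigOperators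

lemma symmDiff_singleton_eq_symmDiff_singleton_iff {α : Type*} [DecidableEq α] {j k l m : α}
    (hlm : l ≠ m) :
    symmDiff {j} {k} = symmDiff ({l} : Finset α) {m} ↔ j = l ∧ k = m ∨ j = m ∧ k = l := by
  simp only [Finset.ext_iff, mem_symmDiff, mem_singleton]
  constructor
  · intro h
    have := h j
    have := h k
    have := h l
    have := h m
    grind
  · rintro (⟨rfl, rfl⟩ | ⟨rfl, rfl⟩) x <;> tauto

lemma sq_expect_le_expect_sq {α : Type*} (s : Finset α) (f : α → ℝ) :
    (𝔼 a ∈ s, f a) ^ 2 ≤ 𝔼 a ∈ s, f a ^ 2 := by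
  rcases s.eq_empty_or_nonempty with rfl | hs
  · simp
  · simpa [expect_const hs] using expect_mul_sq_le_sq_mul_sq s f fun _ => 1

lemma expect_sq_le_of_expect_pow_four_le {α : Type*} (s : Finset α) {X : α → ℝ} {c : ℝ}
    (hX : ∀ a ∈ s, 0 ≤ X a) (h : 𝔼 a ∈ s, X a ^ 4 ≤ c * (𝔼 a ∈ s, X a ^ 2) ^ 2) :
    𝔼 a ∈ s, X a ^ 2 ≤ c * (𝔼 a ∈ s, X a) ^ 2 := by
  set m₁ := 𝔼 a ∈ s, X a
  set m₂ := 𝔼 a ∈ s, X a ^ 2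
  set m₃ := 𝔼 a ∈ s, X a ^ 3
  have h₁ : m₂ ^ 2 ≤ m₁ * m₃ := by
    have hcs := expect_mul_sq_le_sq_mul_sq s (fun a => √(X a)) fun a => X a * √(X a)
    have hfg : ∀ a ∈ s, √(X a) * (X a * √(X a)) = X a ^ 2 := fun a ha => by
      rw [mul_left_comm, Real.mul_self_sqrt (hX a ha), sq]
    have hf : ∀ a ∈ s, √(X a) ^ 2 = X a := fun a ha => Real.sq_sqrt (hX a ha)
    have hg : ∀ a ∈ s, (X a * √(X a)) ^ 2 = X a ^ 3 := fun a ha => by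
      rw [mul_pow, Real.sq_sqrt (hX a ha)]; ring
    rwa [expect_congr rfl hfg, expect_congr rfl hf, expect_congr rfl hg] at hcs
  have h₂ : m₃ ^ 2 ≤ m₂ * 𝔼 a ∈ s, X a ^ 4 := by
    have hcs := expect_mul_sq_le_sq_mul_sq s X fun a => X a ^ 2
    simp only [← pow_succ', ← pow_mul] at hcs
    exact hcs
  have h₃ : m₁ ^ 2 ≤ m₂ := sq_expect_le_expect_sq s X
  have hm₂ : 0 ≤ m₂ := expect_nonneg fun a _ => sq_nonneg (X a)
  have hkey : m₂ ^ 3 * m₂ ≤ m₂ ^ 3 * (c * m₁ ^ 2) :=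
    calc m₂ ^ 3 * m₂ = (m₂ ^ 2) ^ 2 := by ring
      _ ≤ (m₁ * m₃) ^ 2 := pow_le_pow_left₀ (sq_nonneg _) h₁ 2
      _ = m₁ ^ 2 * m₃ ^ 2 := by ring
      _ ≤ m₁ ^ 2 * (m₂ * (c * m₂ ^ 2)) := by gcongr; exact h₂.trans (by gcongr)
      _ = m₂ ^ 3 * (c * m₁ ^ 2) := by ring
  rcases hm₂.eq_or_lt with h0 | hpos
  · have : m₁ = 0 := by nlinarith
    rw [← h0, this]; simp
  · exact le_of_mul_le_mul_left hkey (pow_pos hpos 3)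

lemma sq_sup'_of_nonneg {α : Type*} {s : Finset α} (hs : s.Nonempty) {f : α → ℝ}
    (hf : ∀ a ∈ s, 0 ≤ f a) : s.sup' hs f ^ 2 = s.sup' hs fun a => f a ^ 2 := by
  obtain ⟨b, hb, hmax⟩ := exists_mem_eq_sup' hs f
  refine le_antisymm ?_ (sup'_le hs _ fun a ha => pow_le_pow_left₀ (hf a ha) (le_sup' f ha) 2)
  rw [hmax]
  exact le_sup' (fun a => f a ^ 2) hb

lemma dotProduct_mulVec_self_eq_sum {ι : Type*} [Fintype ι] (G : Matrix ι ι ℝ) (x : ι → ℝ) :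
    x ⬝ᵥ G *ᵥ x = ∑ j, ∑ k, G j k * (x j * x k) := by
  simp only [dotProduct, mulVec, mul_sum]
  exact sum_congr rfl fun j _ => sum_congr rfl fun k _ => by ring

lemma transpose_mul_self_apply_sq_le {κ ι : Type*} [Fintype κ] [Fintype ι] (B : Matrix κ ι ℝ)
    (l m : ι) :
    (Bᵀ * B) l m ^ 2 ≤ (Bᵀ * B) l l * (Bᵀ * B) m m := by
  simpa only [mul_apply, transpose_apply, sq] using
    sum_mul_sq_le_sq_mul_sq univ (fun r => B r l) (fun r => B r m)

lemma sum_sq_transpose_mul_self_le {κ ι : Type*} [Fintype κ] [Fintype ι]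
    (B : Matrix κ ι ℝ) :
    ∑ l, ∑ m, (Bᵀ * B) l m ^ 2 ≤ (Bᵀ * B).trace ^ 2 := by
  calc ∑ l, ∑ m, (Bᵀ * B) l m ^ 2 ≤ ∑ l, ∑ m, (Bᵀ * B) l l * (Bᵀ * B) m m :=
        sum_le_sum fun l _ => sum_le_sum fun m _ => transpose_mul_self_apply_sq_le B l m
    _ = (Bᵀ * B).trace ^ 2 := by rw [sq, trace, sum_mul_sum]; rfl

lemma euclNorm_nonneg {n : ℕ} (v : Fin n → ℝ) : 0 ≤ euclNorm v := Real.sqrt_nonneg _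

lemma euclNorm_eq_norm {n : ℕ} (v : Fin n → ℝ) : euclNorm v = ‖WithLp.toLp 2 v‖ := by
  simp [euclNorm, EuclideanSpace.norm_eq]

lemma euclNorm_sub_euclNorm_le {n : ℕ} (x y : Fin n → ℝ) :
    euclNorm x - euclNorm y ≤ euclNorm (x - y) := by
  simpa only [euclNorm_eq_norm, WithLp.toLp_sub] using norm_sub_norm_le _ _

lemma euclNorm_mulVec_sq {m : ℕ} {ι : Type*} [Fintype ι] (B : Matrix (Fin m) ι ℝ) (x : ι → ℝ) :
    euclNorm (B *ᵥ x) ^ 2 = x ⬝ᵥ (Bᵀ * B) *ᵥ x := by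
  rw [euclNorm, Real.sq_sqrt (sum_nonneg fun i _ => sq_nonneg _), ← mulVec_mulVec,
    dotProduct_mulVec, vecMul_transpose]
  simp only [dotProduct, sq]

namespace BooleanCube

variable {ι : Type*}

def signVec (σ : ι → Bool) (i : ι) : ℝ := if σ i then 1 else -1

def walsh (S : Finset ι) (σ : ι → Bool) : ℝ := ∏ i ∈ S, signVec σ i

lemma signVec_mul_self (σ : ι → Bool) (i : ι) : signVec σ i * signVec σ i = 1 := by
  unfold signVec; split_ifs <;> norm_num

lemma walsh_singleton (i : ι) (σ : ι → Bool) : walsh {i} σ = signVec σ i := prod_singleton _ _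

lemma sum_walsh_mul_walsh [Fintype ι] (σ τ : ι → Bool) :
    ∑ S : Finset ι, walsh S σ * walsh S τ = if σ = τ then 2 ^ Fintype.card ι else 0 := by
  simp only [walsh, ← prod_mul_distrib]
  rw [← powerset_univ, ← prod_one_add]
  split_ifs with hστ
  · simp [hστ, signVec_mul_self, one_add_one_eq_two]
  · obtain ⟨i, hi⟩ := Function.ne_iff.1 hστ
    refine prod_eq_zero (mem_univ i) ?_
    unfold signVec
    cases h : σ i <;> cases h' : τ i <;> simp_all

variable [DecidableEq ι]

lemma walsh_mul_walsh (A B : Finset ι) (σ : ι → Bool) :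
    walsh A σ * walsh B σ = walsh (symmDiff A B) σ := by
  have hsplit : walsh (symmDiff A B) σ * walsh (A ∩ B) σ = walsh (A ∪ B) σ := by
    rw [symmDiff_eq_sup_sdiff_inf]
    exact prod_sdiff inter_subset_union
  have hsq : walsh (A ∩ B) σ * walsh (A ∩ B) σ = 1 := by
    rw [walsh, ← prod_mul_distrib]
    exact prod_eq_one fun i _ => signVec_mul_self σ i
  calc walsh A σ * walsh B σ = walsh (A ∪ B) σ * walsh (A ∩ B) σ := prod_union_inter.symm
    _ = walsh (symmDiff A B) σ := by rw [← hsplit, mul_assoc, hsq, mul_one]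

def flipAt (i : ι) (σ : ι → Bool) : ι → Bool := Function.update σ i (!σ i)

lemma flipAt_involutive (i : ι) : Function.Involutive (flipAt i) := by
  intro σ
  funext j
  by_cases h : j = i
  · subst h; simp [flipAt]
  · simp [flipAt, Function.update_of_ne h]

lemma signVec_flipAt (i : ι) (σ : ι → Bool) (j : ι) :
    signVec (flipAt i σ) j = (if j = i then -1 else 1) * signVec σ j := by
  by_cases h : j = i
  · subst h; cases h' : σ j <;> simp [signVec, flipAt, h']
  · simp [signVec, flipAt, h]

lemma walsh_flipAt (S : Finset ι) (i : ι) (σ : ι → Bool) :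
    walsh S (flipAt i σ) = (if i ∈ S then -1 else 1) * walsh S σ := by
  simp only [walsh, signVec_flipAt, prod_mul_distrib, prod_ite_eq']

lemma signVec_sub_signVec_flipAt (i : ι) (σ : ι → Bool) :
    signVec σ - signVec (flipAt i σ) = Pi.single i (2 * signVec σ i) := by
  funext j
  by_cases h : j = i
  · subst h
    simp only [Pi.sub_apply, signVec_flipAt, if_true, Pi.single_eq_same]
    ring
  · simp [signVec_flipAt, h]

variable [Fintype ι]

lemma expect_walsh (S : Finset ι) : 𝔼 σ, walsh S σ = if S = ∅ then 1 else 0 := by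
  have hsum : ∑ σ : ι → Bool, walsh S σ
      = ∏ i, ∑ b : Bool, if i ∈ S then (if b then 1 else -1 : ℝ) else 1 := by
    rw [Fintype.prod_sum]
    refine sum_congr rfl fun σ _ => ?_
    rw [walsh, prod_ite_mem, univ_inter]
    rfl
  rw [Fintype.expect_eq_sum_div_card, hsum, Fintype.card_fun, Fintype.card_bool]
  split_ifs with hS
  · simp [hS]
  · obtain ⟨i, hi⟩ := nonempty_iff_ne_empty.2 hS
    rw [prod_eq_zero (mem_univ i) (by simp [hi]), zero_div]

lemma expect_walsh_mul_walsh (A B : Finset ι) :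
    𝔼 σ, walsh A σ * walsh B σ = if A = B then 1 else 0 := by
  simp only [walsh_mul_walsh, expect_walsh]
  exact if_congr symmDiff_eq_bot rfl rfl

noncomputable def walshCoeff (f : (ι → Bool) → ℝ) (S : Finset ι) : ℝ := 𝔼 σ, f σ * walsh S σ

lemma sum_walshCoeff_mul_walshCoeff (f g : (ι → Bool) → ℝ) :
    ∑ S, walshCoeff f S * walshCoeff g S = 𝔼 σ, f σ * g σ := by
  have hinner : ∀ σ τ, ∑ S : Finset ι, f σ * walsh S σ * (g τ * walsh S τ)
      = (if σ = τ then (Fintype.card (ι → Bool) : ℝ) else 0) * (f σ * g τ) := by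
    intro σ τ
    calc ∑ S : Finset ι, f σ * walsh S σ * (g τ * walsh S τ)
        = (∑ S : Finset ι, walsh S σ * walsh S τ) * (f σ * g τ) := by
          rw [sum_mul]; exact sum_congr rfl fun S _ => by ring
      _ = _ := by rw [sum_walsh_mul_walsh, Fintype.card_fun, Fintype.card_bool]; push_cast; rfl
  calc ∑ S, walshCoeff f S * walshCoeff g S
      = 𝔼 σ, 𝔼 τ, ∑ S : Finset ι, f σ * walsh S σ * (g τ * walsh S τ) := by
        simp only [walshCoeff, expect_mul_expect, expect_sum_comm]
    _ = 𝔼 σ, f σ * g σ := by simp only [hinner, Finset.expect_boole_mul]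

lemma expect_comp_flipAt (i : ι) (h : (ι → Bool) → ℝ) :
    𝔼 σ, h (flipAt i σ) = 𝔼 σ, h σ :=
  Fintype.expect_bijective _ (flipAt_involutive i).bijective _ _ fun _ => rfl

lemma walshCoeff_sub_comp_flipAt (f : (ι → Bool) → ℝ) (i : ι) (S : Finset ι) :
    walshCoeff (fun σ => f σ - f (flipAt i σ)) S = (if i ∈ S then 2 else 0) * walshCoeff f S := by
  have hflip : 𝔼 σ, f (flipAt i σ) * walsh S σ = (if i ∈ S then -1 else 1) * walshCoeff f S := by
    rw [walshCoeff, mul_expect, ← expect_comp_flipAt i]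
    simp only [flipAt_involutive i _, walsh_flipAt]
    exact expect_congr rfl fun σ _ => by ring
  calc walshCoeff (fun σ => f σ - f (flipAt i σ)) S
      = walshCoeff f S - 𝔼 σ, f (flipAt i σ) * walsh S σ := by
        simp only [walshCoeff, sub_mul, expect_sub_distrib]
    _ = _ := by rw [hflip]; split_ifs <;> ring

theorem efronStein (f : (ι → Bool) → ℝ) :
    𝔼 σ, f σ ^ 2 - (𝔼 σ, f σ) ^ 2 ≤ ∑ i, 𝔼 σ, (f σ - f (flipAt i σ)) ^ 2 / 4 := by
  have hvar : 𝔼 σ, f σ ^ 2 - (𝔼 σ, f σ) ^ 2 = ∑ S ∈ univ.erase ∅, walshCoeff f S ^ 2 := by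
    have hempty : walshCoeff f ∅ = 𝔼 σ, f σ := by simp [walshCoeff, walsh]
    simp only [sum_erase_eq_sub (mem_univ _), sq, sum_walshCoeff_mul_walshCoeff, hempty]
  have hinfl : ∀ i, 𝔼 σ, (f σ - f (flipAt i σ)) ^ 2 / 4
      = ∑ S, if i ∈ S then walshCoeff f S ^ 2 else 0 := by
    intro i
    have hpars := sum_walshCoeff_mul_walshCoeff (fun σ => f σ - f (flipAt i σ))
      (fun σ => f σ - f (flipAt i σ))
    rw [← expect_div]
    simp only [sq, ← hpars, walshCoeff_sub_comp_flipAt, sum_div]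
    exact sum_congr rfl fun S _ => by split_ifs <;> ring
  rw [hvar, sum_congr rfl fun i _ => hinfl i, sum_comm]
  calc ∑ S ∈ univ.erase ∅, walshCoeff f S ^ 2
      ≤ ∑ S ∈ univ.erase ∅, ∑ i, if i ∈ S then walshCoeff f S ^ 2 else 0 := by
        refine sum_le_sum fun S hS => ?_
        obtain ⟨i, hi⟩ := nonempty_iff_ne_empty.2 (ne_of_mem_erase hS)
        calc walshCoeff f S ^ 2 = if i ∈ S then walshCoeff f S ^ 2 else 0 := by rw [if_pos hi]
          _ ≤ _ := single_le_sum (f := fun j => if j ∈ S then walshCoeff f S ^ 2 else 0)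
              (fun j _ => by positivity) (mem_univ i)
    _ ≤ ∑ S, ∑ i, if i ∈ S then walshCoeff f S ^ 2 else 0 :=
        sum_le_sum_of_subset_of_nonneg (subset_univ _) fun S _ _ =>
          sum_nonneg fun i _ => by positivity

lemma expect_sub_comp_flipAt_sq (f : (ι → Bool) → ℝ) (i : ι) :
    𝔼 σ, (f σ - f (flipAt i σ)) ^ 2 = 2 * 𝔼 σ, max (f σ - f (flipAt i σ)) 0 ^ 2 := by
  have hsplit : ∀ a : ℝ, a ^ 2 = max a 0 ^ 2 + max (-a) 0 ^ 2 := fun a => by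
    rcases le_total a 0 with h | h
    · rw [max_eq_right h, max_eq_left (neg_nonneg.2 h)]; ring
    · rw [max_eq_left h, max_eq_right (neg_nonpos.2 h)]; ring
  have hswap : 𝔼 σ, max (-(f σ - f (flipAt i σ))) 0 ^ 2
      = 𝔼 σ, max (f σ - f (flipAt i σ)) 0 ^ 2 := by
    rw [← expect_comp_flipAt i]
    simp only [flipAt_involutive i _, neg_sub]
  rw [expect_congr rfl fun σ _ => hsplit _, expect_add_distrib, hswap, two_mul]

lemma expect_signVec_mul_signVec (j k : ι) :
    𝔼 σ, signVec σ j * signVec σ k = if j = k then 1 else 0 := by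
  simp only [← walsh_singleton, expect_walsh_mul_walsh, singleton_inj]

lemma expect_signVec_mul_four (j k l m : ι) :
    𝔼 σ, signVec σ j * signVec σ k * (signVec σ l * signVec σ m)
      = if symmDiff {j} {k} = symmDiff ({l} : Finset ι) {m} then 1 else 0 := by
  rw [← expect_walsh_mul_walsh]
  simp only [← walsh_singleton, walsh_mul_walsh]

lemma expect_dotProduct_mulVec (G : Matrix ι ι ℝ) :
    𝔼 σ, signVec σ ⬝ᵥ G *ᵥ signVec σ = G.trace := by
  simp only [dotProduct_mulVec_self_eq_sum, expect_sum_comm, ← mul_expect,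
    expect_signVec_mul_signVec, mul_ite, mul_one, mul_zero, sum_ite_eq, mem_univ, if_true]
  rfl

lemma expect_dotProduct_mulVec_mul (G : Matrix ι ι ℝ) (hG : G.IsSymm) (l m : ι) :
    𝔼 σ, (signVec σ ⬝ᵥ G *ᵥ signVec σ) * (signVec σ l * signVec σ m)
      = if l = m then G.trace else 2 * G l m := by
  have hexp : 𝔼 σ, (signVec σ ⬝ᵥ G *ᵥ signVec σ) * (signVec σ l * signVec σ m)
      = ∑ j, ∑ k, if symmDiff {j} {k} = symmDiff ({l} : Finset ι) {m} then G j k else 0 := by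
    simp only [dotProduct_mulVec_self_eq_sum, sum_mul, expect_sum_comm]
    refine sum_congr rfl fun j _ => sum_congr rfl fun k _ => ?_
    rw [← mul_boole, ← expect_signVec_mul_four, mul_expect]
    exact expect_congr rfl fun σ _ => by ring
  rw [hexp]
  split_ifs with hlm
  · subst hlm
    simp only [symmDiff_self, symmDiff_eq_bot, singleton_inj, sum_ite_eq, mem_univ, if_true]
    rfl
  · have hsplit : ∀ j k, (if j = l ∧ k = m ∨ j = m ∧ k = l then G j k else 0)
        = (if j = l ∧ k = m then G j k else 0) + (if j = m ∧ k = l then G j k else 0) := by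
      intro j k
      grind
    simp only [symmDiff_singleton_eq_symmDiff_singleton_iff hlm, hsplit, ite_and,
      sum_add_distrib, sum_ite_irrel, sum_ite_eq', mem_univ, ↓reduceIte, sum_const_zero,
      hG.apply l m]
    ring

lemma expect_dotProduct_transpose_mul_self_sq_le {κ : Type*} [Fintype κ] (B : Matrix κ ι ℝ) :
    𝔼 σ, (signVec σ ⬝ᵥ (Bᵀ * B) *ᵥ signVec σ) ^ 2 ≤ 3 * (Bᵀ * B).trace ^ 2 := by
  set G := Bᵀ * B
  set Q : (ι → Bool) → ℝ := fun σ => signVec σ ⬝ᵥ G *ᵥ signVec σ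
  have hsymm : G.IsSymm := by rw [IsSymm, transpose_mul, transpose_transpose]
  have hexpand : ∀ σ, Q σ ^ 2 = ∑ l, ∑ m, G l m * (Q σ * (signVec σ l * signVec σ m)) := by
    intro σ
    rw [sq]
    nth_rewrite 2 [show Q σ = _ from dotProduct_mulVec_self_eq_sum G (signVec σ)]
    simp only [mul_sum]
    exact sum_congr rfl fun l _ => sum_congr rfl fun m _ => by ring
  have hterm : ∀ l m, G l m * (if l = m then G.trace else 2 * G l m)
      ≤ (if l = m then G l m * G.trace else 0) + 2 * G l m ^ 2 := by
    intro l m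
    split_ifs
    · nlinarith [sq_nonneg (G l m)]
    · nlinarith
  calc 𝔼 σ, Q σ ^ 2
      = ∑ l, ∑ m, G l m * (if l = m then G.trace else 2 * G l m) := by
        simp only [hexpand, expect_sum_comm, ← mul_expect, Q, expect_dotProduct_mulVec_mul G hsymm]
    _ ≤ ∑ l, ∑ m, ((if l = m then G l m * G.trace else 0) + 2 * G l m ^ 2) :=
        sum_le_sum fun l _ => sum_le_sum fun m _ => hterm l m
    _ = G.trace ^ 2 + 2 * ∑ l, ∑ m, G l m ^ 2 := by
        simp only [sum_add_distrib, sum_ite_eq, mem_univ, if_true, ← mul_sum, ← sum_mul]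
        rw [sq]; rfl
    _ ≤ 3 * G.trace ^ 2 := by linarith [sum_sq_transpose_mul_self_le B]

lemma expect_euclNorm_mulVec_sq {m : ℕ} (B : Matrix (Fin m) ι ℝ) :
    𝔼 σ, euclNorm (B *ᵥ signVec σ) ^ 2 = (Bᵀ * B).trace := by
  simp only [euclNorm_mulVec_sq, expect_dotProduct_mulVec]

theorem khinchin {m : ℕ} (B : Matrix (Fin m) ι ℝ) :
    (Bᵀ * B).trace ≤ 3 * (𝔼 σ, euclNorm (B *ᵥ signVec σ)) ^ 2 := by
  have hfour : 𝔼 σ, euclNorm (B *ᵥ signVec σ) ^ 4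
      ≤ 3 * (𝔼 σ, euclNorm (B *ᵥ signVec σ) ^ 2) ^ 2 := by
    simpa only [show ∀ t : ℝ, t ^ 4 = (t ^ 2) ^ 2 from fun t => by ring, euclNorm_mulVec_sq,
      expect_dotProduct_mulVec] using expect_dotProduct_transpose_mul_self_sq_le B
  rw [← expect_euclNorm_mulVec_sq]
  exact expect_sq_le_of_expect_pow_four_le univ (fun σ _ => euclNorm_nonneg _) hfour

lemma euclNorm_mulVec_sub_mulVec_flipAt_sq {m : ℕ} (B : Matrix (Fin m) ι ℝ) (i : ι)
    (σ : ι → Bool) :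
    euclNorm (B *ᵥ signVec σ - B *ᵥ signVec (flipAt i σ)) ^ 2 = 4 * (Bᵀ * B) i i := by
  rw [← mulVec_sub, signVec_sub_signVec_flipAt, euclNorm_mulVec_sq]
  simp only [mulVec_single, single_dotProduct, Pi.smul_apply, col_apply,
    MulOpposite.smul_eq_mul_unop, MulOpposite.unop_op]
  linear_combination (4 * (Bᵀ * B) i i) * signVec_mul_self σ i

section Supremum

variable {m : ℕ} {𝓑 : Finset (Matrix (Fin m) ι ℝ)} (h𝓑 : 𝓑.Nonempty)

lemma sum_posPart_sup_sub_sup_flipAt_sq_le (σ : ι → Bool) :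
    ∑ i, max ((𝓑.sup' h𝓑 fun B => euclNorm (B *ᵥ signVec σ))
      - 𝓑.sup' h𝓑 fun B => euclNorm (B *ᵥ signVec (flipAt i σ))) 0 ^ 2
      ≤ 4 * 𝓑.sup' h𝓑 fun B => (Bᵀ * B).trace := by
  obtain ⟨B, hB, hmax⟩ := exists_mem_eq_sup' h𝓑 fun B => euclNorm (B *ᵥ signVec σ)
  have hcoord : ∀ i, max ((𝓑.sup' h𝓑 fun B => euclNorm (B *ᵥ signVec σ))
      - 𝓑.sup' h𝓑 fun B => euclNorm (B *ᵥ signVec (flipAt i σ))) 0 ^ 2 ≤ 4 * (Bᵀ * B) i i := by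
    intro i
    rw [← euclNorm_mulVec_sub_mulVec_flipAt_sq B i σ, hmax]
    have hdrop : euclNorm (B *ᵥ signVec σ)
        - (𝓑.sup' h𝓑 fun B => euclNorm (B *ᵥ signVec (flipAt i σ)))
        ≤ euclNorm (B *ᵥ signVec σ - B *ᵥ signVec (flipAt i σ)) :=
      (sub_le_sub_left (le_sup' (fun B => euclNorm (B *ᵥ signVec (flipAt i σ))) hB) _).trans
        (euclNorm_sub_euclNorm_le _ _)
    exact pow_le_pow_left₀ (le_max_right _ _) (max_le hdrop (euclNorm_nonneg _)) 2
  calc _ ≤ ∑ i, 4 * (Bᵀ * B) i i := sum_le_sum fun i _ => hcoord i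
    _ = 4 * (Bᵀ * B).trace := by rw [← mul_sum]; rfl
    _ ≤ 4 * 𝓑.sup' h𝓑 fun B => (Bᵀ * B).trace := by
        gcongr; exact le_sup' (fun B => (Bᵀ * B).trace) hB

lemma expect_sup_sq_sub_sq_expect_sup_le :
    𝔼 σ, (𝓑.sup' h𝓑 fun B => euclNorm (B *ᵥ signVec σ)) ^ 2
      - (𝔼 σ, 𝓑.sup' h𝓑 fun B => euclNorm (B *ᵥ signVec σ)) ^ 2
      ≤ 2 * 𝓑.sup' h𝓑 fun B => (Bᵀ * B).trace := by
  set f : (ι → Bool) → ℝ := fun σ => 𝓑.sup' h𝓑 fun B => euclNorm (B *ᵥ signVec σ)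
  calc 𝔼 σ, f σ ^ 2 - (𝔼 σ, f σ) ^ 2 ≤ ∑ i, 𝔼 σ, (f σ - f (flipAt i σ)) ^ 2 / 4 := efronStein f
    _ = 𝔼 σ, (∑ i, max (f σ - f (flipAt i σ)) 0 ^ 2) / 2 := by
        simp only [← expect_div, expect_sub_comp_flipAt_sq, sum_div, expect_sum_comm]
        exact sum_congr rfl fun i _ => by ring
    _ ≤ 𝔼 σ, (4 * 𝓑.sup' h𝓑 fun B => (Bᵀ * B).trace) / 2 :=
        expect_le_expect fun σ _ => by gcongr; exact sum_posPart_sup_sub_sup_flipAt_sq_le h𝓑 σ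
    _ = 2 * 𝓑.sup' h𝓑 fun B => (Bᵀ * B).trace := by rw [Fintype.expect_const]; ring

lemma sup_trace_le_three_mul_sq_expect_sup :
    (𝓑.sup' h𝓑 fun B => (Bᵀ * B).trace)
      ≤ 3 * (𝔼 σ, 𝓑.sup' h𝓑 fun B => euclNorm (B *ᵥ signVec σ)) ^ 2 := by
  obtain ⟨B, hB, hmax⟩ := exists_mem_eq_sup' h𝓑 fun B => (Bᵀ * B).trace
  rw [hmax]
  refine (khinchin B).trans ?_
  gcongr
  · exact expect_nonneg fun σ _ => euclNorm_nonneg _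
  · exact le_sup' (fun B => euclNorm (B *ᵥ signVec σ)) hB

theorem expect_sup_sq_le_seven_mul_sq_expect_sup :
    𝔼 σ, (𝓑.sup' h𝓑 fun B => euclNorm (B *ᵥ signVec σ)) ^ 2
      ≤ 7 * (𝔼 σ, 𝓑.sup' h𝓑 fun B => euclNorm (B *ᵥ signVec σ)) ^ 2 := by
  linarith [expect_sup_sq_sub_sq_expect_sup_le h𝓑, sup_trace_le_three_mul_sq_expect_sup h𝓑]

end Supremum

end BooleanCube

open BooleanCube

section Rademacher

variable {Ω ι : Type*} [MeasurableSpace Ω] {μ : Measure Ω} {ε : Ω → ι → ℝ}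

noncomputable def signPattern (ε : Ω → ι → ℝ) (ω : Ω) (i : ι) : Bool := decide (ε ω i = 1)

lemma measurableSet_decide_eq_one (b : Bool) : MeasurableSet {x : ℝ | decide (x = 1) = b} := by
  cases b
  · simp [← Set.compl_ofPred]
  · simp

lemma measurable_signPattern (hmeas : ∀ i, Measurable fun ω => ε ω i) :
    Measurable (signPattern ε) :=
  measurable_pi_lambda _ fun i =>
    measurable_to_countable' fun b => hmeas i (measurableSet_decide_eq_one b)

lemma ae_eq_signVec_signPattern [IsProbabilityMeasure μ] [Countable ι]
    (hmeas : ∀ i, Measurable fun ω => ε ω i)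
    (hrad : ∀ i, μ {ω | ε ω i = 1} = 1 / 2 ∧ μ {ω | ε ω i = -1} = 1 / 2) :
    ∀ᵐ ω ∂μ, ε ω = signVec (signPattern ε ω) := by
  have hpm : ∀ i, ∀ᵐ ω ∂μ, ε ω i = 1 ∨ ε ω i = -1 := by
    intro i
    have hone : MeasurableSet {ω | ε ω i = 1} := hmeas i (measurableSet_singleton 1)
    have hneg : MeasurableSet {ω | ε ω i = -1} := hmeas i (measurableSet_singleton (-1))
    have hdisj : Disjoint {ω | ε ω i = 1} {ω | ε ω i = -1} :=
      Set.disjoint_left.2 fun ω (h1 : ε ω i = 1) (h2 : ε ω i = -1) => by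
        rw [h1] at h2; norm_num at h2
    refine (ae_mem_iff_measure_eq (hone.union hneg).nullMeasurableSet).2 ?_
    rw [measure_union hdisj hneg, (hrad i).1, (hrad i).2, ENNReal.add_halves, measure_univ]
  filter_upwards [ae_all_iff.2 hpm] with ω hω
  funext i
  rcases hω i with h | h <;> simp [signVec, signPattern, h]

lemma measureReal_map_signPattern_singleton [IsProbabilityMeasure μ] [Fintype ι]
    [DecidableEq ι]
    (hmeas : ∀ i, Measurable fun ω => ε ω i) (hindep : iIndepFun (fun i ω => ε ω i) μ)
    (hrad : ∀ i, μ {ω | ε ω i = 1} = 1 / 2 ∧ μ {ω | ε ω i = -1} = 1 / 2) (σ : ι → Bool) :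
    (μ.map (signPattern ε)).real {σ} = (Fintype.card (ι → Bool) : ℝ)⁻¹ := by
  have hcoord : ∀ i b, μ {ω | signPattern ε ω i = b} = 2⁻¹ := by
    intro i b
    have hone : MeasurableSet {ω | ε ω i = 1} := hmeas i (measurableSet_singleton 1)
    cases b
    · simp only [signPattern, decide_eq_false_iff_not]
      rw [← Set.compl_ofPred, prob_compl_eq_one_sub hone, (hrad i).1]
      norm_num
    · simp only [signPattern, decide_eq_true_eq]
      rw [(hrad i).1, one_div]
  have hinter : signPattern ε ⁻¹' {σ} = ⋂ i, {ω | signPattern ε ω i = σ i} := by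
    ext ω
    simp [funext_iff]
  rw [measureReal_def,
    Measure.map_apply (measurable_signPattern hmeas) (measurableSet_singleton σ), hinter,
    hindep.meas_iInter (s := fun i => {ω | signPattern ε ω i = σ i})
      fun i => ⟨_, measurableSet_decide_eq_one (σ i), rfl⟩]
  simp only [hcoord, prod_const, card_univ, Fintype.card_fun, Fintype.card_bool]
  simp [ENNReal.toReal_inv]

theorem integral_comp_eq_expect_signVec [IsProbabilityMeasure μ] [Fintype ι] [DecidableEq ι]
    (hmeas : ∀ i, Measurable fun ω => ε ω i) (hindep : iIndepFun (fun i ω => ε ω i) μ)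
    (hrad : ∀ i, μ {ω | ε ω i = 1} = 1 / 2 ∧ μ {ω | ε ω i = -1} = 1 / 2)
    (F : (ι → ℝ) → ℝ) :
    ∫ ω, F (ε ω) ∂μ = 𝔼 σ, F (signVec σ) :=
  calc ∫ ω, F (ε ω) ∂μ = ∫ ω, F (signVec (signPattern ε ω)) ∂μ :=
        integral_congr_ae ((ae_eq_signVec_signPattern hmeas hrad).mono fun ω h => congrArg F h)
    _ = ∫ σ, F (signVec σ) ∂(μ.map (signPattern ε)) :=
        (integral_map (f := fun σ => F (signVec σ)) (measurable_signPattern hmeas).aemeasurable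
          Measurable.of_discrete.aestronglyMeasurable).symm
    _ = 𝔼 σ, F (signVec σ) := by
        rw [integral_fintype Integrable.of_finite, Fintype.expect_eq_sum_div_card, sum_div]
        simp only [measureReal_map_signPattern_singleton hmeas hindep hrad, smul_eq_mul]
        exact sum_congr rfl fun σ _ => inv_mul_eq_div _ _

end Rademacher

/-- For a Rademacher vector `ε` and a finite set `𝓑` of matrices,
`(E sup_B ‖Bε‖)² ≤ E sup_B ‖Bε‖² ≤ 9 (E sup_B ‖Bε‖)²`. -/
theorem sup_norm_rademacher_square_comparison
    {Ω : Type*} [MeasurableSpace Ω] (μ : Measure Ω) [IsProbabilityMeasure μ]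
    {n : ℕ} (ε : Ω → Fin n → ℝ)
    (hmeas : ∀ i, Measurable fun ω => ε ω i)
    (hindep : iIndepFun (fun i ω => ε ω i) μ)
    (hrad : ∀ i, μ {ω | ε ω i = 1} = 1/2 ∧ μ {ω | ε ω i = -1} = 1/2)
    (𝓑 : Finset (Matrix (Fin n) (Fin n) ℝ)) (h𝓑 : 𝓑.Nonempty) :
    (∫ ω, 𝓑.sup' h𝓑 (fun B => euclNorm (B.mulVec (ε ω))) ∂μ) ^ 2 ≤
        ∫ ω, 𝓑.sup' h𝓑 (fun B => (euclNorm (B.mulVec (ε ω))) ^ 2) ∂μ ∧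
      ∫ ω, 𝓑.sup' h𝓑 (fun B => (euclNorm (B.mulVec (ε ω))) ^ 2) ∂μ ≤
        9 * (∫ ω, 𝓑.sup' h𝓑 (fun B => euclNorm (B.mulVec (ε ω))) ∂μ) ^ 2 := by
  have hsq : ∀ x : Fin n → ℝ, 𝓑.sup' h𝓑 (fun B => euclNorm (B *ᵥ x) ^ 2)
      = (𝓑.sup' h𝓑 fun B => euclNorm (B *ᵥ x)) ^ 2 :=
    fun x => (sq_sup'_of_nonneg h𝓑 fun B _ => euclNorm_nonneg _).symm
  have hmean := integral_comp_eq_expect_signVec hmeas hindep hrad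
    fun x => 𝓑.sup' h𝓑 fun B => euclNorm (B *ᵥ x)
  have hsecond := integral_comp_eq_expect_signVec hmeas hindep hrad
    fun x => 𝓑.sup' h𝓑 fun B => euclNorm (B *ᵥ x) ^ 2
  beta_reduce at hmean hsecond
  rw [hmean, hsecond]
  simp only [hsq]
  exact ⟨sq_expect_le_expect_sq _ _,
    (expect_sup_sq_le_seven_mul_sq_expect_sup h𝓑).trans (by gcongr; norm_num)⟩
end

section
/- Let δ₁ be a Bernoulli random variable with mean δ ∈ (0, 1/4] and X₁ = δ₁ − δ. Then the subgaussian norm satisfies ‖X₁‖²_{ψ₂} ≍ 1/|log δ|, i.e., there exist absolute constants c, C > 0 with c/|log δ| ≤ ‖X₁‖²_{ψ₂} ≤ C/|log δ|. -/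
open MeasureTheory ProbabilityTheory Real

/-- The ψ₂ (subgaussian) norm of a real random variable:
`‖Y‖_{ψ₂} = inf {t > 0 : E exp(Y²/t²) ≤ 2}`. -/
noncomputable def psi2 {Ω : Type*} [MeasurableSpace Ω] (μ : Measure Ω) (Y : Ω → ℝ) : ℝ :=
  sInf {t : ℝ | 0 < t ∧ ∫ ω, Real.exp ((Y ω) ^ 2 / t ^ 2) ∂μ ≤ 2}

/-!
With `L = -log d`, the two atoms of `X₁` give
`E exp(X₁²/s) = d e^{(1-d)²/s} + (1-d) e^{d²/s}`.
At `s = 2/L` the first term is at most `d e^{L/2} = √d ≤ 1/2` and, since `d L ≤ 1`, the second is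
at most `e^{1/8} ≤ 8/7`; so `‖X₁‖²_{ψ₂} ≤ 2/L`. Conversely, if `E exp(X₁²/t²) ≤ 2` then the
first term alone is at most `2`, which forces `(1-d)²/t² ≤ log (2/d) ≤ 2L`, i.e. `t² ≥ (9/32)/L`.
-/

lemma psi2_sq_mem_Icc {Ω : Type*} [MeasurableSpace Ω] {μ : Measure Ω} {Y : Ω → ℝ} {a b : ℝ}
    (hb : 0 < b) (hub : ∫ ω, exp (Y ω ^ 2 / b) ∂μ ≤ 2)
    (hlb : ∀ t, 0 < t → ∫ ω, exp (Y ω ^ 2 / t ^ 2) ∂μ ≤ 2 → a ≤ t ^ 2) :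
    psi2 μ Y ^ 2 ∈ Set.Icc a b := by
  have hmem : √b ∈ {t : ℝ | 0 < t ∧ ∫ ω, exp (Y ω ^ 2 / t ^ 2) ∂μ ≤ 2} :=
    ⟨sqrt_pos.2 hb, by rwa [sq_sqrt hb.le]⟩
  have hnonneg : 0 ≤ psi2 μ Y := le_csInf ⟨_, hmem⟩ fun t ht => ht.1.le
  constructor
  · have : √a ≤ psi2 μ Y :=
      le_csInf ⟨_, hmem⟩ fun t ht => sqrt_le_iff.2 ⟨ht.1.le, hlb t ht.1 ht.2⟩
    exact (sqrt_le_left hnonneg).1 this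
  · exact (le_sqrt hnonneg hb.le).1 (csInf_le ⟨0, fun t ht => ht.1.le⟩ hmem)

lemma integral_comp_bernoulli {Ω : Type*} [MeasurableSpace Ω] {μ : Measure Ω}
    [IsProbabilityMeasure μ] {d : ℝ} (hd0 : 0 ≤ d) (hd1 : d ≤ 1) {δ1 : Ω → ℝ}
    (hm : Measurable δ1) (h1 : μ {ω | δ1 ω = 1} = ENNReal.ofReal d)
    (h0 : μ {ω | δ1 ω = 0} = ENNReal.ofReal (1 - d)) (g : ℝ → ℝ) :
    ∫ ω, g (δ1 ω) ∂μ = d * g 1 + (1 - d) * g 0 := by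
  set A := {ω | δ1 ω = 1}
  set B := {ω | δ1 ω = 0}
  have hA : MeasurableSet A := hm (measurableSet_singleton 1)
  have hB : MeasurableSet B := hm (measurableSet_singleton 0)
  have hdisj : Disjoint A B := Set.disjoint_left.2 fun ω h1 h0 => one_ne_zero (h1.symm.trans h0)
  have hgA : Set.EqOn (fun ω => g (δ1 ω)) (fun _ => g 1) A := fun _ hω => congrArg g hω
  have hgB : Set.EqOn (fun ω => g (δ1 ω)) (fun _ => g 0) B := fun _ hω => congrArg g hω
  have hfull : ∀ᵐ ω ∂μ, ω ∈ A ∪ B := by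
    rw [ae_iff, ← Set.compl_def, prob_compl_eq_zero_iff (hA.union hB), measure_union hdisj hB,
      h1, h0, ← ENNReal.ofReal_add hd0 (sub_nonneg.2 hd1), add_sub_cancel, ENNReal.ofReal_one]
  calc ∫ ω, g (δ1 ω) ∂μ = ∫ ω in A ∪ B, g (δ1 ω) ∂μ := by
        rw [Measure.restrict_eq_self_of_ae_mem hfull]
    _ = ∫ ω in A, g (δ1 ω) ∂μ + ∫ ω in B, g (δ1 ω) ∂μ :=
        setIntegral_union hdisj hB ((integrableOn_const ..).congr_fun hgA.symm hA)
          ((integrableOn_const ..).congr_fun hgB.symm hB)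
    _ = d * g 1 + (1 - d) * g 0 := by
        rw [setIntegral_congr_fun hA hgA, setIntegral_congr_fun hB hgB, setIntegral_const,
          setIntegral_const, measureReal_def, measureReal_def, h1, h0,
          ENNReal.toReal_ofReal hd0, ENNReal.toReal_ofReal (sub_nonneg.2 hd1), smul_eq_mul,
          smul_eq_mul]

noncomputable def bernoulliExpSq (d s : ℝ) : ℝ :=
  d * exp ((1 - d) ^ 2 / s) + (1 - d) * exp (d ^ 2 / s)

section bernoulliExpSq

variable {d : ℝ}

lemma bernoulliExpSq_le_two (hd0 : 0 < d) (hd : d ≤ 1 / 4) :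
    bernoulliExpSq d (2 / -log d) ≤ 2 := by
  set L := -log d with hL
  have hLpos : 0 < L := neg_pos.2 (log_neg hd0 (by linarith))
  have hfirst : d * exp ((1 - d) ^ 2 / (2 / L)) ≤ 1 / 2 := by
    calc d * exp ((1 - d) ^ 2 / (2 / L)) ≤ d * exp (L / 2) := by
          gcongr d * exp ?_
          rw [div_div_eq_mul_div]
          have : (1 - d) ^ 2 ≤ 1 := by nlinarith
          nlinarith
      _ = exp (log d / 2) := by rw [hL, ← exp_log hd0, ← exp_add, exp_log hd0]; ring_nf
      _ = √d := by rw [exp_half, exp_log hd0]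
      _ ≤ 1 / 2 := (sqrt_le_left (by norm_num)).2 (by linarith)
  have hsecond : (1 - d) * exp (d ^ 2 / (2 / L)) ≤ 8 / 7 := by
    have hdL : d * L ≤ 1 := by
      have := negMulLog_le_one_sub_self hd0.le
      rw [negMulLog, neg_mul, ← mul_neg] at this
      linarith
    have harg : d ^ 2 / (2 / L) ≤ 1 / 8 := by
      rw [div_div_eq_mul_div]
      nlinarith
    calc (1 - d) * exp (d ^ 2 / (2 / L)) ≤ 1 * exp (1 / 8) := by
          gcongr
          · linarith
      _ ≤ 1 / (1 - 1 / 8) := by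
          rw [one_mul]; exact exp_bound_div_one_sub_of_interval (by norm_num) (by norm_num)
      _ = 8 / 7 := by norm_num
  unfold bernoulliExpSq
  linarith

lemma le_sq_of_bernoulliExpSq_le_two (hd0 : 0 < d) (hd : d ≤ 1 / 4) {t : ℝ} (ht : t ≠ 0)
    (h : bernoulliExpSq d (t ^ 2) ≤ 2) : 9 / 32 / -log d ≤ t ^ 2 := by
  set L := -log d with hL
  have hLpos : 0 < L := neg_pos.2 (log_neg hd0 (by linarith))
  have ht2 : 0 < t ^ 2 := by positivity
  have hfirst : exp ((1 - d) ^ 2 / t ^ 2) ≤ 2 / d := by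
    have := one_le_exp (x := d ^ 2 / t ^ 2) (by positivity)
    unfold bernoulliExpSq at h
    rw [le_div_iff₀ hd0]
    nlinarith
  have hlog2 : log 2 ≤ L := by
    rw [hL, ← log_inv]
    exact log_le_log two_pos ((le_inv_comm₀ two_pos hd0).2 (by linarith))
  have hq : (1 - d) ^ 2 / t ^ 2 ≤ 2 * L := by
    calc (1 - d) ^ 2 / t ^ 2 ≤ log (2 / d) := by
          rw [← exp_le_exp, exp_log (by positivity)]; exact hfirst
      _ = log 2 + L := by rw [log_div two_ne_zero hd0.ne', hL, sub_eq_add_neg]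
      _ ≤ 2 * L := by linarith
  rw [div_le_iff₀ ht2] at hq
  rw [div_le_iff₀ hLpos]
  nlinarith

end bernoulliExpSq

/-- For a centered Bernoulli variable `X₁ = δ₁ - δ` with mean `δ ∈ (0, 1/4]`,
the squared subgaussian norm is of order `1/|log δ|`. -/
theorem bernoulli_psi2_order :
    ∃ c C : ℝ, 0 < c ∧ 0 < C ∧
      ∀ (Ω : Type) (_ : MeasurableSpace Ω) (μ : Measure Ω),
        IsProbabilityMeasure μ →
      ∀ (d : ℝ), 0 < d → d ≤ 1/4 →
      ∀ (δ1 : Ω → ℝ), Measurable δ1 →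
        μ {ω | δ1 ω = 1} = ENNReal.ofReal d →
        μ {ω | δ1 ω = 0} = ENNReal.ofReal (1 - d) →
        c / |Real.log d| ≤ (psi2 μ (fun ω => δ1 ω - d)) ^ 2 ∧
          (psi2 μ (fun ω => δ1 ω - d)) ^ 2 ≤ C / |Real.log d| := by
  refine ⟨9 / 32, 2, by norm_num, by norm_num, fun Ω _ μ _ d hd0 hd δ1 hm h1 h0 => ?_⟩
  have hlog : log d < 0 := log_neg hd0 (by linarith)
  have hexp (s : ℝ) : ∫ ω, exp ((δ1 ω - d) ^ 2 / s) ∂μ = bernoulliExpSq d s := by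
    have := integral_comp_bernoulli hd0.le (by linarith) hm h1 h0 fun x => exp ((x - d) ^ 2 / s)
    rwa [zero_sub, neg_sq] at this
  rw [abs_of_neg hlog]
  refine psi2_sq_mem_Icc (div_pos two_pos (neg_pos.2 hlog)) ?_ fun t ht h => ?_
  · rw [hexp]
    exact bernoulliExpSq_le_two hd0 hd
  · rw [hexp] at h
    exact le_sq_of_bernoulliExpSq_le_two hd0 hd ht.ne' h
end

section
/- There exists a family of symmetric random variables X₁ indexed by r ≥ 4, with P(|X₁| = 1) = 1 − e^{−r} and P(|X₁| = √r) = e^{−r}, such that ‖X₁‖_{ψ₂} ≤ √2 and ‖X₁‖_{L₂} ≥ 1/√2, yet for every constant A > 1 there exist r and t ≥ E X₁² with P(X₁² > A t) > (1/A)·P(X₁² > t). In particular, the tail-regularity property P(X₁² > A t) ≤ A^{−1} P(X₁² > t) for all t ≥ E|X₁|² fails for this family uniformly in A. -/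
/-!
Realise `X r = ε · spike r U` on `Bool × [0, 1]` with a fair sign `ε` and an independent uniform
`U`, where `spike r U` is `√r` on `{U ≤ e^{-r}}` and `1` otherwise. Then `X²` takes only the values
`1` and `r`, `E X² = 1 + (r - 1) e^{-r} ∈ [1, 2]`, and
`E exp (X² / 2) = e^{-r/2} + e^{1/2} (1 - e^{-r}) ≤ 1/3 + 5/3`. Taking `t = 2` and `r > 2A`, the
events `{X² > t}` and `{X² > A t}` both equal `{X² = r}`, of probability `e^{-r} > 0`.
-/

open MeasureTheory ProbabilityTheory Real unitInterval

lemma psi2_le_of_integral_exp_le {Ω : Type*} [MeasurableSpace Ω] {μ : Measure Ω} {Y : Ω → ℝ}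
    {t : ℝ} (ht : 0 < t) (h : ∫ ω, exp (Y ω ^ 2 / t ^ 2) ∂μ ≤ 2) : psi2 μ Y ≤ t :=
  csInf_le ⟨0, fun _ hs => hs.1.le⟩ ⟨ht, h⟩

lemma integral_ite_const {Ω : Type*} [MeasurableSpace Ω] {μ : Measure Ω}
    [IsProbabilityMeasure μ] {P : Ω → Prop} [DecidablePred P] (hP : MeasurableSet {ω | P ω})
    (a b : ℝ) :
    ∫ ω, (if P ω then a else b) ∂μ = a * μ.real {ω | P ω} + b * (1 - μ.real {ω | P ω}) := by
  have hsplit : (fun ω => if P ω then a else b) =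
      fun ω => {ω | P ω}.indicator (fun _ => a) ω + {ω | P ω}ᶜ.indicator (fun _ => b) ω := by
    ext ω
    by_cases hω : P ω <;> simp [hω]
  rw [hsplit, integral_add ((integrable_const a).indicator hP)
    ((integrable_const b).indicator hP.compl), integral_indicator_const a hP,
    integral_indicator_const b hP.compl, probReal_compl_eq_one_sub hP, smul_eq_mul, smul_eq_mul,
    mul_comm a, mul_comm b]

section Product

variable {α β : Type*} [MeasurableSpace α] [MeasurableSpace β] (μ : Measure α) (ν : Measure β)
  [IsProbabilityMeasure μ]

lemma MeasureTheory.Measure.prod_setOf_snd [SFinite ν] (P : β → Prop) :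
    μ.prod ν {p | P p.2} = ν {b | P b} := by
  rw [show {p : α × β | P p.2} = Set.univ ×ˢ {b | P b} by ext; simp, Measure.prod_prod,
    measure_univ, one_mul]

lemma integral_prod_fun_snd [SFinite ν] (f : β → ℝ) : ∫ p, f p.2 ∂μ.prod ν = ∫ b, f b ∂ν := by
  rw [integral_fun_snd, probReal_univ, one_smul]

end Product

section RandomSign

noncomputable def fairCoin : Measure Bool := uniformOn Set.univ

instance : IsProbabilityMeasure fairCoin := by
  unfold fairCoin; infer_instance

lemma map_not_fairCoin : fairCoin.map not = fairCoin := by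
  refine Measure.ext_of_singleton fun b => ?_
  rw [Measure.map_apply (measurable_of_countable _) (measurableSet_singleton b),
    show not ⁻¹' {b} = {!b} by ext; simp [Bool.eq_not_iff], fairCoin, uniformOn_univ,
    uniformOn_univ, Measure.count_singleton, Measure.count_singleton]

variable {Ω : Type*} {Y : Ω → ℝ}

def withRandomSign (Y : Ω → ℝ) (p : Bool × Ω) : ℝ := (if p.1 then 1 else -1) * Y p.2

lemma measurable_withRandomSign [MeasurableSpace Ω] (hY : Measurable Y) :
    Measurable (withRandomSign Y) :=
  (Measurable.ite (measurableSet_eq_fun measurable_fst measurable_const) measurable_const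
    measurable_const).mul (hY.comp measurable_snd)

lemma abs_withRandomSign (p : Bool × Ω) : |withRandomSign Y p| = |Y p.2| := by
  rcases p with ⟨_ | _, ω⟩ <;> simp [withRandomSign]

lemma sq_withRandomSign (p : Bool × Ω) : withRandomSign Y p ^ 2 = Y p.2 ^ 2 := by
  rw [← sq_abs, abs_withRandomSign, sq_abs]

lemma withRandomSign_comp_not :
    withRandomSign Y ∘ Prod.map not id = fun p => -withRandomSign Y p := by
  ext ⟨b, ω⟩
  cases b <;> simp [withRandomSign]

lemma identDistrib_withRandomSign_neg [MeasurableSpace Ω] (hY : Measurable Y) (ν : Measure Ω)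
    [SFinite ν] :
    IdentDistrib (withRandomSign Y) (fun p => -withRandomSign Y p)
      (fairCoin.prod ν) (fairCoin.prod ν) where
  aemeasurable_fst := (measurable_withRandomSign hY).aemeasurable
  aemeasurable_snd := (measurable_withRandomSign hY).neg.aemeasurable
  map_eq := by
    have hnot : Measurable (Prod.map not (id : Ω → Ω)) :=
      (measurable_of_countable _).prodMap measurable_id
    rw [← withRandomSign_comp_not, ← Measure.map_map (measurable_withRandomSign hY) hnot,
      ← Measure.map_prod_map _ _ (measurable_of_countable _) measurable_id, map_not_fairCoin,
      Measure.map_id]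

end RandomSign

section Spike

noncomputable def spike (r : ℝ) (u : I) : ℝ := if (u : ℝ) ≤ exp (-r) then √r else 1

variable {r : ℝ}

lemma measurable_spike : Measurable (spike r) :=
  Measurable.ite (measurableSet_le measurable_subtype_coe measurable_const) measurable_const
    measurable_const

lemma abs_spike (u : I) : |spike r u| = spike r u := by
  unfold spike; split_ifs <;> simp

lemma volume_coe_le_exp_neg (hr : 0 ≤ r) :
    volume {u : I | (u : ℝ) ≤ exp (-r)} = ENNReal.ofReal (exp (-r)) :=
  volume_Iic (x := ⟨exp (-r), (exp_pos _).le, exp_le_one_iff.mpr (neg_nonpos.mpr hr)⟩)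

lemma measurableSet_coe_le_exp_neg : MeasurableSet {u : I | (u : ℝ) ≤ exp (-r)} :=
  measurableSet_le measurable_subtype_coe measurable_const

lemma volume_spike_eq_sqrt (hr : 1 < r) :
    volume {u | spike r u = √r} = ENNReal.ofReal (exp (-r)) := by
  have hsqrt : √r ≠ 1 := sqrt_eq_one.not.mpr hr.ne'
  rw [← volume_coe_le_exp_neg (by linarith)]
  congr 1 with u
  by_cases hu : (u : ℝ) ≤ exp (-r) <;> simp [spike, hu, hsqrt.symm]

lemma volume_spike_eq_one (hr : 1 < r) :
    volume {u | spike r u = 1} = ENNReal.ofReal (1 - exp (-r)) := by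
  have hsqrt : √r ≠ 1 := sqrt_eq_one.not.mpr hr.ne'
  have hset : {u | spike r u = 1} = {u : I | (u : ℝ) ≤ exp (-r)}ᶜ := by
    ext u
    by_cases hu : (u : ℝ) ≤ exp (-r) <;> simp [spike, hu, hsqrt, lt_of_not_ge]
  rw [hset, prob_compl_eq_one_sub measurableSet_coe_le_exp_neg,
    volume_coe_le_exp_neg (by linarith), ← ENNReal.ofReal_one,
    ← ENNReal.ofReal_sub _ (exp_pos _).le]

lemma volume_lt_spike_sq {t : ℝ} (ht : 1 ≤ t) (htr : t < r) :
    volume {u | t < spike r u ^ 2} = ENNReal.ofReal (exp (-r)) := by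
  rw [← volume_coe_le_exp_neg (by linarith)]
  congr 1 with u
  by_cases hu : (u : ℝ) ≤ exp (-r) <;>
    simp [spike, hu, sq_sqrt (show 0 ≤ r by linarith), htr, ht]

lemma integral_spike_sq (hr : 0 ≤ r) : ∫ u, spike r u ^ 2 = 1 + (r - 1) * exp (-r) := by
  simp only [spike, apply_ite (· ^ 2), sq_sqrt hr, one_pow]
  rw [integral_ite_const measurableSet_coe_le_exp_neg, measureReal_def,
    volume_coe_le_exp_neg hr, ENNReal.toReal_ofReal (exp_pos _).le]
  ring

lemma integral_spike_sq_le_two (hr : 0 ≤ r) : ∫ u, spike r u ^ 2 ≤ 2 := by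
  have hrare : (r - 1) * exp (-r) ≤ 1 := by
    rw [exp_neg, ← div_eq_mul_inv, div_le_one (exp_pos r)]
    linarith [add_one_le_exp r]
  rw [integral_spike_sq hr]
  linarith

lemma one_le_integral_spike_sq (hr : 1 ≤ r) : 1 ≤ ∫ u, spike r u ^ 2 := by
  rw [integral_spike_sq (by linarith)]
  have := mul_nonneg (sub_nonneg.mpr hr) (exp_pos (-r)).le
  linarith

lemma integral_exp_spike_sq_half_le_two (hr : 4 ≤ r) : ∫ u, exp (spike r u ^ 2 / 2) ≤ 2 := by
  simp only [spike, apply_ite (fun x => exp (x ^ 2 / 2)), sq_sqrt (show 0 ≤ r by linarith),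
    one_pow]
  rw [integral_ite_const measurableSet_coe_le_exp_neg, measureReal_def,
    volume_coe_le_exp_neg (by linarith), ENNReal.toReal_ofReal (exp_pos _).le]
  have hrare : exp (r / 2) * exp (-r) ≤ 1 / 3 := by
    rw [← exp_add, show r / 2 + -r = -(r / 2) by ring, exp_neg, one_div,
      inv_le_inv₀ (exp_pos _) (by norm_num)]
    linarith [add_one_le_exp (r / 2)]
  have hhalf : exp (1 / 2) ≤ 5 / 3 := by
    have hsq : exp (1 / 2) * exp (1 / 2) = exp 1 := by rw [← exp_add]; norm_num
    nlinarith [exp_pos (1 / 2 : ℝ), exp_one_lt_d9]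
  have := mul_nonneg (exp_pos (1 / 2 : ℝ)).le (exp_pos (-r)).le
  nlinarith

end Spike

/-- Counterexample family: symmetric random variables `X r` (for `r ≥ 4`) with
`P(|X r| = 1) = 1 - e^{-r}`, `P(|X r| = √r) = e^{-r}`, subgaussian norm at most `√2`
and `L₂` norm at least `1/√2`, such that for every `A > 1` the tail-regularity
property `P(X² > A t) ≤ A⁻¹ P(X² > t)` (for all `t ≥ E X²`) fails. -/
theorem tail_regularity_counterexample :
    ∃ (Ω : Type) (_ : MeasurableSpace Ω) (μ : Measure Ω) (_ : IsProbabilityMeasure μ)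
      (X : ℝ → Ω → ℝ),
      (∀ r : ℝ, 4 ≤ r →
        Measurable (X r) ∧
        IdentDistrib (X r) (fun ω => -(X r ω)) μ μ ∧
        μ {ω | |X r ω| = 1} = ENNReal.ofReal (1 - Real.exp (-r)) ∧
        μ {ω | |X r ω| = Real.sqrt r} = ENNReal.ofReal (Real.exp (-r)) ∧
        psi2 μ (X r) ≤ Real.sqrt 2 ∧
        1 / Real.sqrt 2 ≤ Real.sqrt (∫ ω, (X r ω) ^ 2 ∂μ)) ∧
      (∀ A : ℝ, 1 < A → ∃ r : ℝ, 4 ≤ r ∧ ∃ t : ℝ,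
        (∫ ω, (X r ω) ^ 2 ∂μ) ≤ t ∧
        ENNReal.ofReal A⁻¹ * μ {ω | (X r ω) ^ 2 > t} <
          μ {ω | (X r ω) ^ 2 > A * t}) := by
  refine ⟨Bool × I, inferInstance, fairCoin.prod volume, inferInstance,
    fun r => withRandomSign (spike r), fun r hr => ?_, fun A hA => ?_⟩
  all_goals simp only [abs_withRandomSign, abs_spike, sq_withRandomSign, gt_iff_lt]
  · refine ⟨measurable_withRandomSign measurable_spike,
      identDistrib_withRandomSign_neg measurable_spike _,
      (Measure.prod_setOf_snd _ _ _).trans (volume_spike_eq_one (by linarith)),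
      (Measure.prod_setOf_snd _ _ _).trans (volume_spike_eq_sqrt (by linarith)), ?_, ?_⟩
    · refine psi2_le_of_integral_exp_le (by positivity) ?_
      simp_rw [sq_withRandomSign, sq_sqrt zero_le_two]
      exact (integral_prod_fun_snd _ _ _).trans_le (integral_exp_spike_sq_half_le_two hr)
    · rw [integral_prod_fun_snd _ _ fun u => spike r u ^ 2]
      calc 1 / √2 ≤ 1 := by rw [div_le_one (by positivity)]; exact one_le_sqrt.mpr one_le_two
        _ ≤ √(∫ u, spike r u ^ 2) := one_le_sqrt.mpr (one_le_integral_spike_sq (by linarith))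
  · refine ⟨2 * A + 4, by linarith, 2,
      (integral_prod_fun_snd _ _ _).trans_le (integral_spike_sq_le_two (by linarith)), ?_⟩
    rw [Measure.prod_setOf_snd _ _ fun u => 2 < spike _ u ^ 2,
      Measure.prod_setOf_snd _ _ fun u => A * 2 < spike _ u ^ 2,
      volume_lt_spike_sq one_le_two (by linarith), volume_lt_spike_sq (by linarith) (by linarith),
      ← ENNReal.ofReal_mul (inv_nonneg.mpr (by linarith)),
      ENNReal.ofReal_lt_ofReal_iff (exp_pos _)]
    exact mul_lt_of_lt_one_left (exp_pos _) (inv_lt_one_of_one_lt₀ hA)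
end

section
/- Let W₁,…,Wₙ be independent nonnegative random variables with P(max_i W_i > 0) ≤ 1/8. Then E[W₁ + ⋯ + Wₙ] ≤ 8·E[max_i W_i]. -/
open MeasureTheory ProbabilityTheory Real

/-!
Let `A i` be the event that every `W j` with `j ≠ i` vanishes. It is determined by the `W j`,
`j ≠ i`, hence independent of `W i`, so `E[W i; A i] = P(A i) E[W i] ≥ (1 - p) E[W i]` with
`p = P(max W > 0) ≥ P((A i)ᶜ)`. At every point at most one of the terms `W i 1_{A i}` is nonzero,
so `∑ W i 1_{A i} ≤ max W`. Summing over `i` gives `(1 - p) E[∑ W i] ≤ E[max W]`, and `p ≤ 1/8`.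
-/

namespace ProbabilityTheory

variable {Ω ι β : Type*} {mΩ : MeasurableSpace Ω} {μ : Measure Ω}

def othersZero [Zero β] (W : ι → Ω → β) (i : ι) : Set Ω := {ω | ∀ j ≠ i, W j ω = 0}

lemma measurableSet_othersZero [Countable ι] [Zero β] {mβ : MeasurableSpace β}
    [MeasurableSingletonClass β] (W : ι → Ω → β) (i : ι) :
    MeasurableSet[⨆ j ∈ ({i}ᶜ : Set ι), mβ.comap (W j)] (othersZero W i) := by
  have : othersZero W i = ⋂ j ∈ ({i}ᶜ : Set ι), W j ⁻¹' {0} := by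
    ext ω; simp [othersZero]
  rw [this]
  refine MeasurableSet.biInter (Set.to_countable _) fun j hj => ?_
  exact le_iSup₂ (f := fun j (_ : j ∈ ({i}ᶜ : Set ι)) => mβ.comap (W j)) j hj
    _ ⟨{0}, measurableSet_singleton 0, rfl⟩

lemma iIndepFun.setIntegral_othersZero [Countable ι] {W : ι → Ω → ℝ} (hindep : iIndepFun W μ)
    (hmeas : ∀ i, Measurable (W i)) (i : ι) :
    ∫ ω in othersZero W i, W i ω ∂μ = μ.real (othersZero W i) * ∫ ω, W i ω ∂μ := by
  have hindep' : Indep (⨆ j ∈ ({i}ᶜ : Set ι), MeasurableSpace.comap (W j) _)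
      (⨆ j ∈ ({i} : Set ι), MeasurableSpace.comap (W j) _) μ :=
    indep_iSup_of_disjoint (fun j => (hmeas j).comap_le) hindep.iIndep
      (Set.disjoint_compl_left_iff_subset.mpr subset_rfl)
  rw [iSup_singleton] at hindep'
  exact hindep'.setIntegral_eq_mul (f := id) (iSup₂_le fun j _ => (hmeas j).comap_le)
    (hmeas i).aemeasurable (measurableSet_othersZero W i) aestronglyMeasurable_id

lemma compl_othersZero_subset [Finite ι] {W : ι → Ω → ℝ} (hnonneg : ∀ i ω, 0 ≤ W i ω) (i : ι) :
    (othersZero W i)ᶜ ⊆ {ω | 0 < ⨆ j, W j ω} := by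
  intro ω hω
  obtain ⟨j, -, hj⟩ : ∃ j ≠ i, W j ω ≠ 0 := by simpa [othersZero] using hω
  exact ((hnonneg j ω).lt_of_ne' hj).trans_le
    (le_ciSup (Set.finite_range fun j => W j ω).bddAbove j)

lemma sum_indicator_othersZero_le_iSup [Fintype ι] {W : ι → Ω → ℝ} (ω : Ω)
    (hnonneg : ∀ i, 0 ≤ W i ω) :
    ∑ i, (othersZero W i).indicator (W i) ω ≤ ⨆ i, W i ω := by
  by_cases hzero : ∀ k, W k ω = 0
  · calc ∑ i, (othersZero W i).indicator (W i) ω = 0 :=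
          Finset.sum_eq_zero fun i _ => by simp [hzero i]
      _ ≤ _ := Real.iSup_nonneg hnonneg
  obtain ⟨k, hk⟩ := not_forall.mp hzero
  have hsingle : ∀ i ≠ k, (othersZero W i).indicator (W i) ω = 0 := fun i hik =>
    Set.indicator_of_notMem (fun (hω : ω ∈ othersZero W i) => hk (hω k hik.symm)) _
  calc ∑ i, (othersZero W i).indicator (W i) ω = (othersZero W k).indicator (W k) ω :=
        Fintype.sum_eq_single k hsingle
    _ ≤ W k ω := Set.indicator_le_self' (fun _ _ => hnonneg k) ω
    _ ≤ ⨆ i, W i ω := le_ciSup (Set.finite_range fun j => W j ω).bddAbove k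

lemma one_sub_measureReal_mul_integral_sum_le_integral_iSup [Fintype ι] [IsProbabilityMeasure μ]
    {W : ι → Ω → ℝ} (hmeas : ∀ i, Measurable (W i)) (hnonneg : ∀ i ω, 0 ≤ W i ω)
    (hindep : iIndepFun W μ) :
    (1 - μ.real {ω | 0 < ⨆ i, W i ω}) * ∫ ω, ∑ i, W i ω ∂μ ≤ ∫ ω, ⨆ i, W i ω ∂μ := by
  set p := μ.real {ω | 0 < ⨆ i, W i ω}
  by_cases hint : Integrable (fun ω => ∑ i, W i ω) μ
  swap
  · rw [integral_undef hint, mul_zero]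
    exact integral_nonneg fun ω => Real.iSup_nonneg fun i => hnonneg i ω
  have hle_sum : ∀ i ω, W i ω ≤ ∑ j, W j ω := fun i ω =>
    Finset.single_le_sum (fun j _ => hnonneg j ω) (Finset.mem_univ i)
  have hWint : ∀ i, Integrable (W i) μ := fun i =>
    hint.mono' (hmeas i).aestronglyMeasurable
      (ae_of_all _ fun ω => by simpa [abs_of_nonneg (hnonneg i ω)] using hle_sum i ω)
  have hsup_int : Integrable (fun ω => ⨆ i, W i ω) μ :=
    hint.mono' (Measurable.iSup hmeas).aestronglyMeasurable (ae_of_all _ fun ω => by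
      rw [Real.norm_eq_abs, abs_of_nonneg (Real.iSup_nonneg fun i => hnonneg i ω)]
      exact Real.iSup_le (fun i => hle_sum i ω) (Finset.sum_nonneg fun j _ => hnonneg j ω))
  have hA : ∀ i, MeasurableSet (othersZero W i) := fun i =>
    iSup₂_le (fun j _ => (hmeas j).comap_le) _ (measurableSet_othersZero W i)
  have hp : ∀ i, 1 - p ≤ μ.real (othersZero W i) := fun i => by
    have := measureReal_mono (μ := μ) (compl_othersZero_subset hnonneg i)
    linarith [probReal_compl_eq_one_sub (μ := μ) (hA i)]
  calc (1 - p) * ∫ ω, ∑ i, W i ω ∂μ = ∑ i, (1 - p) * ∫ ω, W i ω ∂μ := by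
        rw [integral_finsetSum _ fun i _ => hWint i, Finset.mul_sum]
    _ ≤ ∑ i, μ.real (othersZero W i) * ∫ ω, W i ω ∂μ :=
        Finset.sum_le_sum fun i _ =>
          mul_le_mul_of_nonneg_right (hp i) (integral_nonneg (hnonneg i))
    _ = ∑ i, ∫ ω, (othersZero W i).indicator (W i) ω ∂μ := by
        simp_rw [integral_indicator (hA _), hindep.setIntegral_othersZero hmeas]
    _ = ∫ ω, ∑ i, (othersZero W i).indicator (W i) ω ∂μ :=
        (integral_finsetSum _ fun i _ => (hWint i).indicator (hA i)).symm
    _ ≤ ∫ ω, ⨆ i, W i ω ∂μ :=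
        integral_mono (integrable_finsetSum _ fun i _ => (hWint i).indicator (hA i)) hsup_int
          fun ω => sum_indicator_othersZero_le_iSup ω fun i => hnonneg i ω

end ProbabilityTheory

/-- Hoffman–Jørgensen type bound: for independent nonnegative random variables
`W₁, …, Wₙ` with `P(max_i W_i > 0) ≤ 1/8`, one has `E[∑ W_i] ≤ 8 E[max_i W_i]`. -/
theorem hoffman_jorgensen_nonneg
    {Ω : Type*} [MeasurableSpace Ω] (μ : Measure Ω) [IsProbabilityMeasure μ]
    {n : ℕ} (W : Fin n → Ω → ℝ)
    (hmeas : ∀ i, Measurable (W i))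
    (hnonneg : ∀ i ω, 0 ≤ W i ω)
    (hindep : iIndepFun W μ)
    (hsmall : μ {ω | (⨆ i, W i ω) > 0} ≤ 1/8) :
    ∫ ω, ∑ i, W i ω ∂μ ≤ 8 * ∫ ω, ⨆ i, W i ω ∂μ := by
  have hp : μ.real {ω | 0 < ⨆ i, W i ω} ≤ 1 / 8 := by
    simpa [measureReal_def] using ENNReal.toReal_mono (by norm_num) hsmall
  have hkey := one_sub_measureReal_mul_integral_sum_le_integral_iSup hmeas hnonneg hindep
  have hsum_nonneg : 0 ≤ ∫ ω, ∑ i, W i ω ∂μ :=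
    integral_nonneg fun ω => Finset.sum_nonneg fun i _ => hnonneg i ω
  nlinarith
end

section
/- Let δ = (δ₁,…,δₙ) be independent Bernoulli(δ) random variables and let A be a symmetric n×n real matrix. Then E[(δδᵀ ⊙ A)²] = δ³A² + (δ² − δ³)[Diag(A²) + Off(A)·Diag(A) + Diag(A)·Off(A)] + (δ − δ²)·Diag(A)², where ⊙ is the Hadamard (entrywise) product, Diag(A) is the diagonal part, and Off(A) = A − Diag(A). -/
/-! Entrywise, `(δδᵀ ⊙ A)² i j = ∑ₖ A i k A k j δᵢ δₖ² δⱼ`. Since `δₖ² = δₖ` almost surely, the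
product `δᵢ δₖ² δⱼ` collapses to the product of `δₘ` over the distinct indices among `i, k, j`,
whose mean is `p ^ #{i, k, j}` by independence. The formula is the bookkeeping of this exponent:
it is `3` unless `k = i` or `k = j`, which produces the diagonal corrections. -/

open MeasureTheory ProbabilityTheory Matrix Finset

theorem Finset.prod_insert_of_mul_self {ι M : Type*} [CommMonoid M] [DecidableEq ι]
    {x : ι → M} {s : Finset ι} {a : ι} (ha : x a * x a = x a) :
    ∏ m ∈ insert a s, x m = x a * ∏ m ∈ s, x m := by
  by_cases h : a ∈ s
  · rw [insert_eq_of_mem h, ← mul_prod_erase s x h, ← mul_assoc, ha]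
  · exact prod_insert h

theorem mul_mul_mul_eq_prod_triple {ι R : Type*} [CommRing R] [DecidableEq ι] {x : ι → R}
    (hx : ∀ m, x m * x m = x m) (i k j : ι) :
    x i * x k * (x k * x j) = ∏ m ∈ {i, k, j}, x m := by
  rw [prod_insert_of_mul_self (hx i), prod_insert_of_mul_self (hx k), prod_singleton]
  linear_combination x i * x j * hx k

theorem pow_card_triple_of_ne {ι R : Type*} [CommRing R] [DecidableEq ι] (p : R) {i j : ι}
    (hij : i ≠ j) (k : ι) :
    p ^ #{i, k, j} = p ^ 3 + (if k = i then p ^ 2 - p ^ 3 else 0)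
      + (if k = j then p ^ 2 - p ^ 3 else 0) := by
  by_cases hki : k = i
  · subst hki
    simp [hij]
  by_cases hkj : k = j
  · subst hkj
    simp [hij, hki]
  · rw [card_insert_of_notMem (by simp [Ne.symm hki, hij]), card_pair hkj]
    simp [hki, hkj]

theorem pow_card_triple_self {ι R : Type*} [CommRing R] [DecidableEq ι] (p : R) (i k : ι) :
    p ^ #{i, k, i} = p ^ 2 + (if k = i then p - p ^ 2 else 0) := by
  by_cases hki : k = i
  · subst hki
    simp
  · rw [pair_comm, insert_eq_of_mem (by simp), card_pair (Ne.symm hki)]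
    simp [hki]

section MatrixIdentity

variable {n R : Type*} [Fintype n] [DecidableEq n] [CommRing R]

theorem sum_mul_pow_card_triple_eq (A : Matrix n n R) (p : R) (i j : n) :
    ∑ k, A i k * A k j * p ^ #{i, k, j} =
      (p ^ 3 • (A * A)
        + (p ^ 2 - p ^ 3) •
            (diagonal (fun k => (A * A) k k)
              + (A - diagonal fun k => A k k) * (diagonal fun k => A k k)
              + (diagonal fun k => A k k) * (A - diagonal fun k => A k k))
        + (p - p ^ 2) • ((diagonal fun k => A k k) * (diagonal fun k => A k k))) i j := by
  rcases eq_or_ne i j with rfl | hij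
  · simp only [pow_card_triple_self, mul_add, mul_ite, mul_zero, sum_add_distrib,
      sum_ite_eq', mem_univ, if_true, ← sum_mul, ← mul_apply]
    simp only [diagonal_mul_diagonal, Matrix.add_apply, Matrix.smul_apply, smul_eq_mul,
      diagonal_apply_eq, mul_diagonal, diagonal_mul, Matrix.sub_apply, sub_self, zero_mul,
      mul_zero, add_zero]
    ring
  · simp only [pow_card_triple_of_ne p hij, mul_add, mul_ite, mul_zero, sum_add_distrib,
      sum_ite_eq', mem_univ, if_true, ← sum_mul, ← mul_apply]
    simp only [diagonal_mul_diagonal, Matrix.add_apply, Matrix.smul_apply, smul_eq_mul,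
      diagonal_apply_ne _ hij, mul_zero, mul_diagonal, diagonal_mul, Matrix.sub_apply, sub_zero,
      zero_add]
    ring

end MatrixIdentity

section Bernoulli

variable {Ω : Type*} [MeasurableSpace Ω] {μ : Measure Ω} {X : Ω → ℝ} {p : ℝ}

theorem ae_eq_zero_or_one_of_measure_eq [IsProbabilityMeasure μ] (hX : Measurable X)
    (hp0 : 0 ≤ p) (hp1 : p ≤ 1) (h1 : μ {ω | X ω = 1} = ENNReal.ofReal p)
    (h0 : μ {ω | X ω = 0} = ENNReal.ofReal (1 - p)) :
    ∀ᵐ ω ∂μ, X ω = 0 ∨ X ω = 1 := by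
  have hm : ∀ c : ℝ, MeasurableSet {ω | X ω = c} := fun c => hX (measurableSet_singleton c)
  have hdisj : Disjoint {ω | X ω = 0} {ω | X ω = 1} :=
    Set.disjoint_left.2 fun ω (h0 : X ω = 0) (h1 : X ω = 1) => by simp_all
  rw [ae_iff_measure_eq (p := fun ω => X ω = 0 ∨ X ω = 1)
    ((hm 0).union (hm 1)).nullMeasurableSet, Set.ofPred_or, measure_union hdisj (hm 1), h0, h1,
    ← ENNReal.ofReal_add (by linarith) hp0, measure_univ]
  simp

theorem integral_eq_of_ae_eq_zero_or_one (hX : Measurable X)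
    (h01 : ∀ᵐ ω ∂μ, X ω = 0 ∨ X ω = 1) (hp0 : 0 ≤ p)
    (h1 : μ {ω | X ω = 1} = ENNReal.ofReal p) : ∫ ω, X ω ∂μ = p := by
  have hXind : X =ᵐ[μ] {ω | X ω = 1}.indicator 1 := by
    filter_upwards [h01] with ω hω
    rcases hω with h | h <;> simp [Set.indicator, h]
  rw [integral_congr_ae hXind,
    integral_indicator_one (s := {ω | X ω = 1}) (hX (measurableSet_singleton 1)),
    measureReal_def, h1, ENNReal.toReal_ofReal hp0]

end Bernoulli

section IndependentFamily

variable {Ω ι : Type*} [MeasurableSpace Ω] {μ : Measure Ω} {X : ι → Ω → ℝ}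

theorem ProbabilityTheory.iIndepFun.integral_finset_prod_eq_pow (hindep : iIndepFun X μ)
    (hX : ∀ m, AEStronglyMeasurable (X m) μ) {p : ℝ} (hmean : ∀ m, ∫ ω, X m ω ∂μ = p)
    (s : Finset ι) : ∫ ω, ∏ m ∈ s, X m ω ∂μ = p ^ #s := by
  have h := (hindep.precomp (g := ((↑) : s → ι)) Subtype.val_injective
    ).integral_fun_prod_eq_prod_integral fun m => hX m
  simp only [hmean, prod_const, card_univ, Fintype.card_coe] at h
  rw [← h]
  exact integral_congr_ae (.of_forall fun ω => (prod_coe_sort s fun m => X m ω).symm)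

theorem integrable_finset_prod_of_ae_eq_zero_or_one [IsFiniteMeasure μ]
    (hX : ∀ m, Measurable (X m)) (h01 : ∀ m, ∀ᵐ ω ∂μ, X m ω = 0 ∨ X m ω = 1)
    (s : Finset ι) : Integrable (fun ω => ∏ m ∈ s, X m ω) μ := by
  refine Integrable.of_mem_Icc 0 1 (s.measurable_fun_prod fun m _ => hX m).aemeasurable ?_
  filter_upwards [(Filter.eventually_all_finset s).2 fun m _ => h01 m] with ω hω
  have hbound : ∀ m ∈ s, 0 ≤ X m ω ∧ X m ω ≤ 1 := fun m hm => by
    rcases hω m hm with h | h <;> simp [h]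
  exact ⟨prod_nonneg fun m hm => (hbound m hm).1, prod_le_one (fun m hm => (hbound m hm).1)
    fun m hm => (hbound m hm).2⟩

end IndependentFamily

theorem integral_hadamard_mul_self_apply {Ω n : Type*} [MeasurableSpace Ω] {μ : Measure Ω}
    [Fintype n] (δ : Ω → n → ℝ) (A : Matrix n n ℝ)
    (hint : ∀ i k j, Integrable (fun ω => δ ω i * δ ω k * (δ ω k * δ ω j)) μ) (i j : n) :
    ∫ ω, ((of fun k l => δ ω k * δ ω l * A k l) *
        (of fun k l => δ ω k * δ ω l * A k l)) i j ∂μ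
      = ∑ k, A i k * A k j * ∫ ω, δ ω i * δ ω k * (δ ω k * δ ω j) ∂μ := by
  have hentry : ∀ ω, ((of fun k l => δ ω k * δ ω l * A k l) *
      (of fun k l => δ ω k * δ ω l * A k l)) i j
        = ∑ k, A i k * A k j * (δ ω i * δ ω k * (δ ω k * δ ω j)) := fun ω => by
    simp only [mul_apply, of_apply]
    exact sum_congr rfl fun k _ => by ring
  simp only [hentry]
  rw [integral_finsetSum _ fun k _ => (hint i k j).const_mul _]
  simp only [integral_const_mul]

theorem bernoulli_hadamard_square_formula_general
    {Ω : Type*} [MeasurableSpace Ω] (μ : Measure Ω) [IsProbabilityMeasure μ]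
    {n : ℕ} (δv : Ω → Fin n → ℝ) (p : ℝ) (hp0 : 0 ≤ p) (hp1 : p ≤ 1)
    (hmeas : ∀ i, Measurable fun ω => δv ω i)
    (hindep : iIndepFun (fun i ω => δv ω i) μ)
    (hber : ∀ i, μ {ω | δv ω i = 1} = ENNReal.ofReal p ∧
      μ {ω | δv ω i = 0} = ENNReal.ofReal (1 - p))
    (A : Matrix (Fin n) (Fin n) ℝ) :
    ∀ i j, (∫ ω,
        ((Matrix.of fun k l => δv ω k * δv ω l * A k l) *
          (Matrix.of fun k l => δv ω k * δv ω l * A k l)) i j ∂μ) =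
      (p ^ 3 • (A * A)
        + (p ^ 2 - p ^ 3) •
            (Matrix.diagonal (fun k => (A * A) k k)
              + (A - Matrix.diagonal fun k => A k k) * (Matrix.diagonal fun k => A k k)
              + (Matrix.diagonal fun k => A k k) * (A - Matrix.diagonal fun k => A k k))
        + (p - p ^ 2) • ((Matrix.diagonal fun k => A k k) *
            (Matrix.diagonal fun k => A k k))) i j := by
  intro i j
  have h01 : ∀ m, ∀ᵐ ω ∂μ, δv ω m = 0 ∨ δv ω m = 1 := fun m =>
    ae_eq_zero_or_one_of_measure_eq (hmeas m) hp0 hp1 (hber m).1 (hber m).2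
  have hmean : ∀ m, ∫ ω, δv ω m ∂μ = p := fun m =>
    integral_eq_of_ae_eq_zero_or_one (hmeas m) (h01 m) hp0 (hber m).1
  have hcollapse : ∀ i k j, (fun ω => δv ω i * δv ω k * (δv ω k * δv ω j))
      =ᵐ[μ] fun ω => ∏ m ∈ {i, k, j}, δv ω m := fun i k j => by
    filter_upwards [ae_all_iff.2 h01] with ω hω
    exact mul_mul_mul_eq_prod_triple (fun m => by rcases hω m with h | h <;> simp [h]) i k j
  have hint : ∀ i k j, Integrable (fun ω => δv ω i * δv ω k * (δv ω k * δv ω j)) μ :=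
    fun i k j => (integrable_finset_prod_of_ae_eq_zero_or_one hmeas h01 _).congr
      (hcollapse i k j).symm
  have hmoment : ∀ k, ∫ ω, δv ω i * δv ω k * (δv ω k * δv ω j) ∂μ = p ^ #{i, k, j} :=
    fun k => by
    rw [integral_congr_ae (hcollapse i k j),
      hindep.integral_finset_prod_eq_pow (fun m => (hmeas m).aestronglyMeasurable) hmean]
  rw [integral_hadamard_mul_self_apply δv A hint, ← sum_mul_pow_card_triple_eq]
  simp only [hmoment]

/-- Exact formula for `E[(δδᵀ ⊙ A)²]` for a vector `δ` of i.i.d. Bernoulli(p)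
variables and a symmetric matrix `A`:
`E[(δδᵀ ⊙ A)²] = p³A² + (p² − p³)[Diag(A²) + Off(A)Diag(A) + Diag(A)Off(A)]
  + (p − p²) Diag(A)²`. -/
theorem bernoulli_hadamard_square_formula
    {Ω : Type*} [MeasurableSpace Ω] (μ : Measure Ω) [IsProbabilityMeasure μ]
    {n : ℕ} (δv : Ω → Fin n → ℝ) (p : ℝ) (hp0 : 0 ≤ p) (hp1 : p ≤ 1)
    (hmeas : ∀ i, Measurable fun ω => δv ω i)
    (hindep : iIndepFun (fun i ω => δv ω i) μ)
    (hber : ∀ i, μ {ω | δv ω i = 1} = ENNReal.ofReal p ∧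
      μ {ω | δv ω i = 0} = ENNReal.ofReal (1 - p))
    (A : Matrix (Fin n) (Fin n) ℝ) (hA : A.IsSymm) :
    ∀ i j, (∫ ω,
        ((Matrix.of fun k l => δv ω k * δv ω l * A k l) *
          (Matrix.of fun k l => δv ω k * δv ω l * A k l)) i j ∂μ) =
      (p ^ 3 • (A * A)
        + (p ^ 2 - p ^ 3) •
            (Matrix.diagonal (fun k => (A * A) k k)
              + (A - Matrix.diagonal fun k => A k k) * (Matrix.diagonal fun k => A k k)
              + (Matrix.diagonal fun k => A k k) * (A - Matrix.diagonal fun k => A k k))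
        + (p - p ^ 2) • ((Matrix.diagonal fun k => A k k) *
            (Matrix.diagonal fun k => A k k))) i j :=
  bernoulli_hadamard_square_formula_general μ δv p hp0 hp1 hmeas hindep hber A
end

section
/- Let δ = (δ₁,…,δₙ) be independent Bernoulli(δ) variables with δ ≤ 1 and A a symmetric n×n real matrix. Then E[(δδᵀ ⊙ A)²] ⪯ δ²(A² + Diag(A²)) + δ·Diag(A)² in the positive semidefinite order. -/
/-!
Entrywise, `E[(δδᵀ ⊙ A)²]ᵢⱼ = ∑ₖ E[δᵢδₖδⱼ] Aᵢₖ Aₖⱼ`, and for `0/1`-valued independent variables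
`E[δᵢδₖδⱼ] = p ^ #{i, k, j}`. Inclusion–exclusion over the coincidences among `i, k, j` gives the
exact formula, with `D = Diag(A)` and `Off(A) = A - D`,
`E[(δδᵀ ⊙ A)²] = p³A² + (p² - p³)(Diag(A²) + Off(A)D + D Off(A)) + (p - p²)D²`.
Since `A²/2 - (Off(A)D + D Off(A)) = (A - 2D)²/2 ⪰ 0`, the bound exceeds the expectation by at least
`((p² - p³)/2)A² + p³Diag(A²) + p²D² ⪰ 0`.
-/

open MeasureTheory ProbabilityTheory Matrix Finset
open scoped MatrixOrder

section Bernoulli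

variable {Ω ι : Type*} [MeasurableSpace Ω] {μ : Measure Ω} {p : ℝ}

lemma ae_eq_zero_or_eq_one_of_measure_eq [IsProbabilityMeasure μ] {Y : Ω → ℝ}
    (hY : Measurable Y) (hp0 : 0 ≤ p) (hp1 : p ≤ 1)
    (h1 : μ {ω | Y ω = 1} = ENNReal.ofReal p) (h0 : μ {ω | Y ω = 0} = ENNReal.ofReal (1 - p)) :
    ∀ᵐ ω ∂μ, Y ω = 0 ∨ Y ω = 1 := by
  have hdisj : Disjoint {ω | Y ω = 0} {ω | Y ω = 1} :=
    Set.disjoint_left.2 fun ω h0 h1 => zero_ne_one (h0.symm.trans h1)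
  have hmeas : MeasurableSet ({ω | Y ω = 0} ∪ {ω | Y ω = 1}) :=
    (hY (measurableSet_singleton 0)).union (hY (measurableSet_singleton 1))
  refine (ae_mem_iff_measure_eq hmeas.nullMeasurableSet).2 ?_
  rw [measure_union hdisj (hY (measurableSet_singleton 1)), h0, h1,
    ← ENNReal.ofReal_add (by linarith) hp0, measure_univ]
  norm_num

variable {X : ι → Ω → ℝ}

lemma measureReal_biInter_preimage_one_eq_pow_card (hX : iIndepFun X μ) (hp0 : 0 ≤ p)
    (h1 : ∀ i, μ {ω | X i ω = 1} = ENNReal.ofReal p) (s : Finset ι) :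
    μ.real (⋂ i ∈ s, X i ⁻¹' {1}) = p ^ #s := by
  rw [measureReal_def, hX.measure_inter_preimage_eq_mul s fun _ _ => measurableSet_singleton 1]
  simp_rw [Set.preimage, Set.mem_singleton_iff, h1, prod_const, ENNReal.toReal_pow,
    ENNReal.toReal_ofReal hp0]

lemma measurableSet_biInter_preimage_one (hmeas : ∀ i, Measurable (X i)) (s : Finset ι) :
    MeasurableSet (⋂ i ∈ s, X i ⁻¹' {1}) :=
  .biInter s.countable_toSet fun i _ => hmeas i (measurableSet_singleton 1)

variable [DecidableEq ι]

lemma mul_mul_mul_ae_eq_indicator (hX01 : ∀ i, ∀ᵐ ω ∂μ, X i ω = 0 ∨ X i ω = 1) (i k j : ι) :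
    (fun ω => X i ω * X k ω * (X k ω * X j ω))
      =ᵐ[μ] (⋂ l ∈ ({i, k, j} : Finset ι), X l ⁻¹' {1}).indicator 1 := by
  filter_upwards [hX01 i, hX01 k, hX01 j] with ω hi hk hj
  rcases hi with hi | hi <;> rcases hk with hk | hk <;> rcases hj with hj | hj <;>
    simp [hi, hk, hj]

lemma integral_mul_mul_mul_eq_pow_card (hX : iIndepFun X μ) (hmeas : ∀ i, Measurable (X i))
    (hp0 : 0 ≤ p) (h1 : ∀ i, μ {ω | X i ω = 1} = ENNReal.ofReal p)
    (hX01 : ∀ i, ∀ᵐ ω ∂μ, X i ω = 0 ∨ X i ω = 1) (i k j : ι) :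
    ∫ ω, X i ω * X k ω * (X k ω * X j ω) ∂μ = p ^ #{i, k, j} := by
  rw [integral_congr_ae (mul_mul_mul_ae_eq_indicator hX01 i k j),
    integral_indicator_one (measurableSet_biInter_preimage_one hmeas _),
    measureReal_biInter_preimage_one_eq_pow_card hX hp0 h1]

variable [IsProbabilityMeasure μ]

lemma integrable_mul_mul_mul (hmeas : ∀ i, Measurable (X i))
    (hX01 : ∀ i, ∀ᵐ ω ∂μ, X i ω = 0 ∨ X i ω = 1) (i k j : ι) :
    Integrable (fun ω => X i ω * X k ω * (X k ω * X j ω)) μ :=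
  ((integrable_const 1).indicator (measurableSet_biInter_preimage_one hmeas _)).congr
    (mul_mul_mul_ae_eq_indicator hX01 i k j).symm

lemma integral_hadamard_mul_self_apply_s14 [Fintype ι] (hX : iIndepFun X μ)
    (hmeas : ∀ i, Measurable (X i)) (hp0 : 0 ≤ p) (h1 : ∀ i, μ {ω | X i ω = 1} = ENNReal.ofReal p)
    (hX01 : ∀ i, ∀ᵐ ω ∂μ, X i ω = 0 ∨ X i ω = 1) (A : Matrix ι ι ℝ) (i j : ι) :
    ∫ ω, ((vecMulVec (X · ω) (X · ω) ⊙ A) * (vecMulVec (X · ω) (X · ω) ⊙ A)) i j ∂μ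
      = ∑ k, p ^ #{i, k, j} * (A i k * A k j) := by
  have hterm (k : ι) : (fun ω => X i ω * X k ω * A i k * (X k ω * X j ω * A k j))
      = fun ω => X i ω * X k ω * (X k ω * X j ω) * (A i k * A k j) := by
    ext ω; ring
  simp only [mul_apply, hadamard_apply, vecMulVec_apply]
  rw [integral_finsetSum _ fun k _ => by
    rw [hterm]; exact (integrable_mul_mul_mul hmeas hX01 i k j).mul_const _]
  refine sum_congr rfl fun k _ => ?_
  rw [hterm, integral_mul_const, integral_mul_mul_mul_eq_pow_card hX hmeas hp0 h1 hX01]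

end Bernoulli

section Loewner

variable {n : Type*} [Fintype n] [DecidableEq n]

omit [Fintype n] in
lemma pow_card_triple {R : Type*} [CommRing R] (p : R) (i k j : n) :
    p ^ #{i, k, j} = p ^ 3 + (p ^ 2 - p ^ 3) * ((if i = k then 1 else 0) +
      (if k = j then 1 else 0) + (if i = j then 1 else 0)) +
      (p - 3 * p ^ 2 + 2 * p ^ 3) * ((if i = k then 1 else 0) * (if k = j then 1 else 0)) := by
  by_cases hik : i = k <;> by_cases hkj : k = j <;> by_cases hij : i = j <;>
    simp_all [card_insert_of_notMem]
  ring

lemma of_sum_pow_card_mul_mul_eq {R : Type*} [CommRing R] (p : R) (A : Matrix n n R) :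
    of (fun i j => ∑ k, p ^ #{i, k, j} * (A i k * A k j))
      = p ^ 3 • (A * A) + (p ^ 2 - p ^ 3) • (diagonal (A * A).diag
          + ((A - diagonal A.diag) * diagonal A.diag + diagonal A.diag * (A - diagonal A.diag)))
        + (p - p ^ 2) • (diagonal A.diag * diagonal A.diag) := by
  ext i j
  simp only [pow_card_triple, add_mul, mul_add, sum_add_distrib, of_apply, Matrix.add_apply,
    Matrix.smul_apply, smul_eq_mul, mul_apply, ite_mul, zero_mul, sum_ite_eq, sum_ite_eq',
    mem_univ, if_true, ← mul_sum, mul_ite, mul_zero, mul_one, Matrix.sub_apply, sub_mul, mul_sub,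
    diagonal_apply, diag_apply]
  by_cases hij : i = j
  · subst hij; simp [mul_assoc, ← mul_sum]; ring
  · simp [hij]; ring

lemma sub_mul_add_mul_sub_le_half_mul_self {A D : Matrix n n ℝ} (hA : A.IsHermitian)
    (hD : D.IsHermitian) : (A - D) * D + D * (A - D) ≤ (2⁻¹ : ℝ) • (A * A) := by
  have hB : (A - (2 : ℝ) • D)ᴴ = A - (2 : ℝ) • D := by
    rw [conjTranspose_sub, conjTranspose_smul, hA.eq, hD.eq, star_trivial]
  have hsq : (2⁻¹ : ℝ) • (A * A) - ((A - D) * D + D * (A - D))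
      = (2⁻¹ : ℝ) • ((A - (2 : ℝ) • D)ᴴ * (A - (2 : ℝ) • D)) := by
    rw [hB]
    simp only [sub_mul, mul_sub, smul_mul_assoc, mul_smul_comm]
    module
  rw [Matrix.le_iff, hsq]
  exact (posSemidef_conjTranspose_mul_self _).smul (by norm_num)

end Loewner

/-- Loewner bound: for a vector `δ` of i.i.d. Bernoulli(p) variables (`p ≤ 1`) and a
symmetric matrix `A`, `E[(δδᵀ ⊙ A)²] ⪯ p²(A² + Diag(A²)) + p Diag(A)²`. -/
theorem bernoulli_hadamard_square_loewner
    {Ω : Type*} [MeasurableSpace Ω] (μ : Measure Ω) [IsProbabilityMeasure μ]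
    {n : ℕ} (δv : Ω → Fin n → ℝ) (p : ℝ) (hp0 : 0 ≤ p) (hp1 : p ≤ 1)
    (hmeas : ∀ i, Measurable fun ω => δv ω i)
    (hindep : iIndepFun (fun i ω => δv ω i) μ)
    (hber : ∀ i, μ {ω | δv ω i = 1} = ENNReal.ofReal p ∧
      μ {ω | δv ω i = 0} = ENNReal.ofReal (1 - p))
    (A : Matrix (Fin n) (Fin n) ℝ) (hA : A.IsSymm) :
    (p ^ 2 • (A * A + Matrix.diagonal fun k => (A * A) k k)
      + p • ((Matrix.diagonal fun k => A k k) * (Matrix.diagonal fun k => A k k))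
      - Matrix.of (fun i j => ∫ ω,
          ((Matrix.of fun k l => δv ω k * δv ω l * A k l) *
            (Matrix.of fun k l => δv ω k * δv ω l * A k l)) i j ∂μ)).PosSemidef := by
  have hA' : A.IsHermitian := isHermitian_iff_isSymm.2 hA
  have hX01 (i : Fin n) : ∀ᵐ ω ∂μ, δv ω i = 0 ∨ δv ω i = 1 :=
    ae_eq_zero_or_eq_one_of_measure_eq (hmeas i) hp0 hp1 (hber i).1 (hber i).2
  have hE : of (fun i j => ∫ ω, ((of fun k l => δv ω k * δv ω l * A k l) *
      (of fun k l => δv ω k * δv ω l * A k l)) i j ∂μ)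
      = of fun i j => ∑ k, p ^ #{i, k, j} * (A i k * A k j) := by
    ext i j
    exact integral_hadamard_mul_self_apply_s14 hindep hmeas hp0 (fun i => (hber i).1) hX01 A i j
  have hAA : (A * A).PosSemidef := by
    simpa only [hA'.eq] using posSemidef_conjTranspose_mul_self A
  have hDD : (diagonal A.diag * diagonal A.diag).PosSemidef :=
    diagonal_mul_diagonal A.diag A.diag ▸ .diagonal fun k => mul_self_nonneg (A k k)
  have hp23 : 0 ≤ p ^ 2 - p ^ 3 := by nlinarith [sq_nonneg p]
  rw [← Matrix.le_iff, hE, of_sum_pow_card_mul_mul_eq,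
    show (fun k => A k k) = A.diag from rfl, show (fun k => (A * A) k k) = (A * A).diag from rfl]
  calc _ ≤ p ^ 3 • (A * A) + (p ^ 2 - p ^ 3) • (diagonal (A * A).diag + (2⁻¹ : ℝ) • (A * A))
          + (p - p ^ 2) • (diagonal A.diag * diagonal A.diag) := by
        gcongr
        exact sub_mul_add_mul_sub_le_half_mul_self hA' (isHermitian_diagonal _)
    _ ≤ _ + (((p ^ 2 - p ^ 3) / 2) • (A * A) + p ^ 3 • diagonal (A * A).diag
          + p ^ 2 • (diagonal A.diag * diagonal A.diag)) :=
        le_add_of_nonneg_right (((hAA.smul (by positivity)).add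
          ((PosSemidef.diagonal fun k => hAA.diag_nonneg).smul (by positivity))).add
          (hDD.smul (by positivity))).nonneg
    _ = _ := by module
end
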